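/- arXiv:1306.0943 — 13 statements merged into one kernel-verified Lean document; each statement's English description precedes it below -/
import Mathlib

section
/- For every set A of four positive integers, the number of 2-element subsets B of A such that the sum of the elements of B divides the sum of the elements of A is at most 4. -/
/-!
Write `A = {a, b, c, d}` with `a < b < c < d`. If the sum of a pair `B ⊆ A` divides the sum of
`A`, it divides the sum of the complementary pair, which is positive; so the complement's sum is
at least that of `B`. This fails for `{b, d}` (complement `{a, c}`) and `{c, d}` (complement
`{a, b}`), leaving at most `6 - 2 = 4` of the pairs.
-/

open Finset

theorem Finset.exists_eq_of_card_eq_four {α : Type*} [LinearOrder α] {s : Finset α}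
    (h : s.card = 4) : ∃ a b c d, a < b ∧ b < c ∧ c < d ∧ s = {a, b, c, d} := by
  set f := s.orderEmbOfFin h
  refine ⟨f 0, f 1, f 2, f 3, f.strictMono (by decide), f.strictMono (by decide),
    f.strictMono (by decide), ?_⟩
  apply Finset.coe_injective
  rw [← s.range_orderEmbOfFin h]
  ext x
  simp only [Set.mem_range, Fin.exists_fin_succ, Fin.exists_fin_zero, or_false, coe_insert,
    coe_singleton, Set.mem_insert_iff, Set.mem_singleton_iff, eq_comm]
  rfl

theorem Finset.card_filter_le_card_sub {α : Type*} [DecidableEq α] {s t : Finset α}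
    {p : α → Prop} [DecidablePred p] (hts : t ⊆ s) (ht : ∀ x ∈ t, ¬ p x) :
    (s.filter p).card ≤ s.card - t.card := by
  rw [← card_sdiff_of_subset hts]
  exact card_le_card fun x hx => mem_sdiff.mpr
    ⟨(mem_filter.mp hx).1, fun hxt => ht x hxt (mem_filter.mp hx).2⟩

theorem Nat.not_dvd_add_of_lt {m n : ℕ} (hm : 0 < m) (h : m < n) : ¬ n ∣ m + n :=
  fun hdvd => Nat.not_dvd_of_pos_of_lt hm h (Nat.dvd_add_self_right.mp hdvd)

theorem stmt_0_general (A : Finset ℕ) (hcard : A.card = 4) :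
    (A.powerset.filter (fun B => B.card = 2 ∧ B.sum id ∣ A.sum id)).card ≤ 4 := by
  obtain ⟨a, b, c, d, hab, hbc, hcd, hA⟩ := Finset.exists_eq_of_card_eq_four hcard
  have hsum : A.sum id = (a + c) + (b + d) := by
    rw [hA, sum_insert (by simp; omega), sum_insert (by simp; omega), sum_pair hcd.ne]
    simp only [id]
    ring
  have hbd_not_dvd : ¬ b + d ∣ A.sum id := hsum ▸ Nat.not_dvd_add_of_lt (by omega) (by omega)
  have hcd_not_dvd : ¬ c + d ∣ A.sum id :=
    (show A.sum id = (a + b) + (c + d) by rw [hsum]; ring) ▸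
      Nat.not_dvd_add_of_lt (by omega) (by omega)
  have hpairs_ne : ({b, d} : Finset ℕ) ≠ {c, d} := fun h => by
    simpa [hbc.ne, (hbc.trans hcd).ne] using Finset.ext_iff.mp h b
  calc (A.powerset.filter (fun B => B.card = 2 ∧ B.sum id ∣ A.sum id)).card
      = ((A.powersetCard 2).filter (fun B => B.sum id ∣ A.sum id)).card := by
        rw [powersetCard_eq_filter, filter_filter]
    _ ≤ (A.powersetCard 2).card - ({{b, d}, {c, d}} : Finset (Finset ℕ)).card := by
        refine card_filter_le_card_sub ?_ ?_
        · simp [insert_subset_iff, mem_powersetCard, hA, (hbc.trans hcd).ne, hcd.ne]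
        · simpa [sum_pair (hbc.trans hcd).ne, sum_pair hcd.ne] using ⟨hbd_not_dvd, hcd_not_dvd⟩
    _ = 4 := by rw [card_powersetCard, hcard, card_pair hpairs_ne]; rfl

/-- For every set `A` of four positive integers, the number of 2-element subsets `B` of `A`
whose sum divides the sum of `A` is at most 4. -/
theorem stmt_0 (A : Finset ℕ) (hcard : A.card = 4) (hpos : ∀ a ∈ A, 0 < a) :
    (A.powerset.filter (fun B => B.card = 2 ∧ B.sum id ∣ A.sum id)).card ≤ 4 :=
  stmt_0_general A hcard
end

section
/- Let A be a set of four positive integers. Then A has exactly 4 two-element divisors if and only if there exists a positive integer a such that A = {a, 5a, 7a, 11a} or A = {a, 11a, 19a, 29a}. -/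
/-!
Write `A = {a, b, c, d}` with `a < b < c < d` and `S = a + b + c + d`. A pair sum that divides `S`
and is smaller than `S` is at most `S / 2`, which rules out `b + d` and `c + d`; so there are four
divisors exactly when `a + b`, `a + c`, `a + d` and `b + c` all divide `S`. Then `a + d` and
`b + c` divide each other, hence `S = 2 (b + c)`. Comparing sizes (with `a > 0`),
`S = 3 (a + c)` and `S = 4 (a + b)` or `S = 5 (a + b)`, and these linear equations give the two
families.
-/

open Finset

def pairDivisors (A : Finset ℕ) : Finset (Finset ℕ) :=
  A.powerset.filter fun B => #B = 2 ∧ B.sum id ∣ A.sum id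

theorem mem_pairDivisors {A B : Finset ℕ} :
    B ∈ pairDivisors A ↔ B ⊆ A ∧ #B = 2 ∧ B.sum id ∣ A.sum id := by
  simp [pairDivisors]

theorem Finset.exists_lt_lt_lt_eq_of_card_eq_four {α : Type*} [LinearOrder α] {s : Finset α}
    (h : #s = 4) : ∃ a b c d, a < b ∧ b < c ∧ c < d ∧ s = {a, b, c, d} := by
  refine ⟨s.orderEmbOfFin h 0, s.orderEmbOfFin h 1, s.orderEmbOfFin h 2, s.orderEmbOfFin h 3,
    by simp, by simp, by simp, ?_⟩
  conv_lhs => rw [← s.image_orderEmbOfFin_univ h]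
  simp [Fin.univ_succ, image_insert]

theorem Nat.two_mul_le_of_dvd_of_lt {m n : ℕ} (hdvd : m ∣ n) (hlt : m < n) : 2 * m ≤ n := by
  by_contra h
  exact hlt.ne (Nat.eq_of_dvd_of_lt_two_mul (by omega) hdvd (by omega)).symm

section Quadruple

variable {a b c d : ℕ}

theorem sum_id_quadruple (hab : a < b) (hbc : b < c) (hcd : c < d) :
    ({a, b, c, d} : Finset ℕ).sum id = a + b + c + d := by
  rw [sum_insert (by simp; omega), sum_insert (by simp; omega), sum_pair hcd.ne]
  simp [add_assoc]

theorem card_small_pairs (hab : a < b) (hbc : b < c) (hcd : c < d) :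
    #({{a, b}, {a, c}, {a, d}, {b, c}} : Finset (Finset ℕ)) = 4 := by
  have hb : b ∉ ({a, c} : Finset ℕ) ∧ b ∉ ({a, d} : Finset ℕ) := by simp; omega
  have hc : c ∉ ({a, d} : Finset ℕ) := by simp; omega
  have ha : a ∉ ({b, c} : Finset ℕ) := by simp; omega
  rw [card_insert_of_notMem, card_insert_of_notMem, card_pair]
  · exact ne_of_mem_of_not_mem' (by simp) ha
  · simp only [mem_insert, mem_singleton, not_or]
    exact ⟨ne_of_mem_of_not_mem' (by simp) hc, ne_of_mem_of_not_mem' (by simp) ha⟩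
  · simp only [mem_insert, mem_singleton, not_or]
    exact ⟨ne_of_mem_of_not_mem' (by simp) hb.1, ne_of_mem_of_not_mem' (by simp) hb.2,
      ne_of_mem_of_not_mem' (by simp) ha⟩

theorem pairDivisors_quadruple (hab : a < b) (hbc : b < c) (hcd : c < d) :
    pairDivisors {a, b, c, d} =
      ({{a, b}, {a, c}, {a, d}, {b, c}} : Finset (Finset ℕ)).filter
        fun B => B.sum id ∣ a + b + c + d := by
  ext B
  simp only [mem_pairDivisors, mem_filter, sum_id_quadruple hab hbc hcd]
  constructor
  · rintro ⟨hBA, hB2, hdvd⟩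
    obtain ⟨x, y, hxy, rfl⟩ := card_eq_two.mp hB2
    have hx : x ∈ ({a, b, c, d} : Finset ℕ) := hBA (by simp)
    have hy : y ∈ ({a, b, c, d} : Finset ℕ) := hBA (by simp)
    refine ⟨?_, hdvd⟩
    rw [sum_pair hxy, id, id] at hdvd
    simp only [mem_insert, mem_singleton] at hx hy
    rcases hx with rfl | rfl | rfl | rfl <;> rcases hy with rfl | rfl | rfl | rfl <;>
      first
        | omega
        | have := Nat.two_mul_le_of_dvd_of_lt hdvd (by omega); omega
        | simp [pair_comm]
  · rintro ⟨hB, hdvd⟩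
    simp only [mem_insert, mem_singleton] at hB
    rcases hB with rfl | rfl | rfl | rfl <;>
      refine ⟨by simp [insert_subset_iff], card_pair (by omega), hdvd⟩

theorem card_pairDivisors_quadruple_eq_four_iff (hab : a < b) (hbc : b < c) (hcd : c < d) :
    #(pairDivisors {a, b, c, d}) = 4 ↔
      a + b ∣ a + b + c + d ∧ a + c ∣ a + b + c + d ∧ a + d ∣ a + b + c + d ∧
        b + c ∣ a + b + c + d := by
  rw [pairDivisors_quadruple hab hbc hcd, ← card_small_pairs hab hbc hcd, card_filter_eq_iff]
  simp [sum_pair hab.ne, sum_pair (hab.trans hbc).ne, sum_pair (hab.trans (hbc.trans hcd)).ne,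
    sum_pair hbc.ne]

theorem eq_of_small_pair_sums_dvd (ha : 0 < a) (hab : a < b) (hbc : b < c)
    (h : a + b ∣ a + b + c + d ∧ a + c ∣ a + b + c + d ∧ a + d ∣ a + b + c + d ∧
      b + c ∣ a + b + c + d) :
    (b = 5 * a ∧ c = 7 * a ∧ d = 11 * a) ∨ (b = 11 * a ∧ c = 19 * a ∧ d = 29 * a) := by
  obtain ⟨hab_dvd, hac_dvd, had_dvd, hbc_dvd⟩ := h
  have hS : a + b + c + d = (a + d) + (b + c) := by ring
  rw [hS] at hab_dvd hac_dvd
  have hmid : a + d = b + c := Nat.dvd_antisymm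
    ((Nat.dvd_add_right dvd_rfl).mp (hS ▸ had_dvd))
    ((Nat.dvd_add_left dvd_rfl).mp (hS ▸ hbc_dvd))
  obtain ⟨k, hk⟩ := hac_dvd
  have hk : k = 3 := by
    have h2 : 2 < k := Nat.lt_of_mul_lt_mul_left (a := a + c) (by omega)
    have h4 : k < 4 := Nat.lt_of_mul_lt_mul_left (a := a + c) (by omega)
    omega
  subst hk
  obtain ⟨m, hm⟩ := hab_dvd
  have h3 : 3 < m := Nat.lt_of_mul_lt_mul_left (a := a + b) (by omega)
  -- fails for `a = 0`: `{0, b, 2b, 3b}` has four pair divisors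
  have h6 : m < 6 := Nat.lt_of_mul_lt_mul_left (a := a + b) (by omega)
  interval_cases m <;> omega

end Quadruple

/-- A set `A` of four positive integers has exactly 4 two-element divisors if and only if
`A = {a, 5a, 7a, 11a}` or `A = {a, 11a, 19a, 29a}` for some positive integer `a`. -/
theorem stmt_1 (A : Finset ℕ) (hcard : A.card = 4) (hpos : ∀ a ∈ A, 0 < a) :
    (A.powerset.filter (fun B => B.card = 2 ∧ B.sum id ∣ A.sum id)).card = 4 ↔
      ∃ a : ℕ, 0 < a ∧
        (A = {a, 5 * a, 7 * a, 11 * a} ∨ A = {a, 11 * a, 19 * a, 29 * a}) := by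
  change #(pairDivisors A) = 4 ↔ _
  constructor
  · obtain ⟨a, b, c, d, hab, hbc, hcd, rfl⟩ := exists_lt_lt_lt_eq_of_card_eq_four hcard
    intro h
    rcases eq_of_small_pair_sums_dvd (hpos a (by simp)) hab hbc
        ((card_pairDivisors_quadruple_eq_four_iff hab hbc hcd).mp h) with
      ⟨rfl, rfl, rfl⟩ | ⟨rfl, rfl, rfl⟩
    · exact ⟨a, by omega, Or.inl rfl⟩
    · exact ⟨a, by omega, Or.inr rfl⟩
  · rintro ⟨a, ha, rfl | rfl⟩ <;>
      refine (card_pairDivisors_quadruple_eq_four_iff (by omega) (by omega) (by omega)).mpr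
        ⟨?_, ?_, ?_, ?_⟩
    exacts [⟨4, by ring⟩, ⟨3, by ring⟩, ⟨2, by ring⟩, ⟨2, by ring⟩,
      ⟨5, by ring⟩, ⟨3, by ring⟩, ⟨2, by ring⟩, ⟨2, by ring⟩]
end

section
/- For every n ≥ 1 there exists a set A of n positive integers such that the number of divisors of A is at least 2^(n-1). -/
/-!
Any `n - 1` positive integers, say with sum `s`, can be completed by `t = (2s + 1)! - s`: the
total sum becomes `(2s + 1)!`, which every subset sum of the first `n - 1` numbers divides.
Those `2 ^ (n - 1) - 1` nonempty subsets together with the whole set give the divisors.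
-/

open Finset Nat

def sumDivisors (A : Finset ℕ) : Finset (Finset ℕ) :=
  A.powerset.filter (fun B => B.Nonempty ∧ B.sum id ∣ A.sum id)

theorem two_pow_card_le_card_sumDivisors {S A : Finset ℕ} (hSA : S ⊂ A)
    (hdvd : ∀ B ⊆ S, B.Nonempty → B.sum id ∣ A.sum id) :
    2 ^ S.card ≤ (sumDivisors A).card := by
  have hsub : insert A (S.powerset.erase ∅) ⊆ sumDivisors A := by
    intro B hB
    simp only [sumDivisors, mem_insert, mem_erase, mem_powerset, mem_filter] at hB ⊢
    rcases hB with rfl | ⟨hne, hBS⟩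
    · obtain ⟨a, ha, -⟩ := exists_of_ssubset hSA
      exact ⟨subset_rfl, ⟨a, ha⟩, dvd_rfl⟩
    · have hB : B.Nonempty := nonempty_iff_ne_empty.mpr hne
      exact ⟨hBS.trans hSA.subset, hB, hdvd B hBS hB⟩
  have hA : A ∉ S.powerset.erase ∅ := fun h =>
    hSA.not_subset (mem_powerset.mp (mem_of_mem_erase h))
  calc 2 ^ S.card = (S.powerset.erase ∅).card + 1 := by
        rw [card_erase_of_mem (empty_mem_powerset S), card_powerset,
          Nat.sub_add_cancel Nat.one_le_two_pow]
    _ = (insert A (S.powerset.erase ∅)).card := (card_insert_of_notMem hA).symm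
    _ ≤ (sumDivisors A).card := card_le_card hsub

theorem exists_two_pow_card_le_card_sumDivisors_insert (S : Finset ℕ)
    (hS : ∀ a ∈ S, 0 < a) :
    ∃ t, 0 < t ∧ t ∉ S ∧ 2 ^ S.card ≤ (sumDivisors (insert t S)).card := by
  obtain ⟨s, hs⟩ : ∃ s, S.sum id = s := ⟨_, rfl⟩
  have hs_lt : 2 * s < (2 * s + 1)! := (Nat.lt_succ_self _).trans_le (self_le_factorial _)
  have ht : (2 * s + 1)! - s ∉ S := fun h => by
    have : id ((2 * s + 1)! - s) ≤ S.sum id := single_le_sum (fun _ _ => Nat.zero_le _) h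
    rw [hs, id] at this
    omega
  have hsum : (insert ((2 * s + 1)! - s) S).sum id = (2 * s + 1)! := by
    rw [sum_insert ht, hs, id]
    omega
  refine ⟨_, by omega, ht, two_pow_card_le_card_sumDivisors (ssubset_insert ht) ?_⟩
  intro B hBS hB
  rw [hsum]
  exact Nat.dvd_factorial (sum_pos (fun b hb => hS b (hBS hb)) hB)
    ((hs ▸ sum_le_sum_of_subset hBS).trans (by omega))

/-- For every `n ≥ 1` there is a set of `n` positive integers with at least `2 ^ (n - 1)`
divisors. -/
theorem stmt_2 (n : ℕ) (hn : 1 ≤ n) :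
    ∃ A : Finset ℕ, A.card = n ∧ (∀ a ∈ A, 0 < a) ∧
      2 ^ (n - 1) ≤ (A.powerset.filter (fun B => B.Nonempty ∧ B.sum id ∣ A.sum id)).card := by
  have hS : ∀ a ∈ Icc 1 (n - 1), 0 < a := fun a ha => (mem_Icc.mp ha).1
  obtain ⟨t, ht, htS, hcard⟩ := exists_two_pow_card_le_card_sumDivisors_insert _ hS
  refine ⟨insert t (Icc 1 (n - 1)), ?_, ?_, ?_⟩
  · rw [card_insert_of_notMem htS, Nat.card_Icc]
    omega
  · simpa [ht] using hS
  · rwa [Nat.card_Icc, Nat.add_sub_cancel] at hcard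
end

section
/- Let n ≥ 2 and let A' be any set of n-1 positive integers. Then there exists a positive integer a not in A' such that, setting A = A' ∪ {a}, every nonempty subset of A' is a divisor of A. -/
/-!
Every nonempty subset of `A'` has its sum between `1` and `S = ∑ A'`, so all these sums divide
`(2S + 1)!`. Choosing `a = (2S + 1)! - S` makes the total sum exactly `(2S + 1)!`, and `a > S`
guarantees `a ∉ A'`.
-/

open scoped Nat

namespace Finset

lemma sub_sum_notMem_of_two_mul_sum_lt {A : Finset ℕ} {N : ℕ} (h : 2 * A.sum id < N) :
    N - A.sum id ∉ A := fun hmem => by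
  have : N - A.sum id ≤ A.sum id := single_le_sum (f := id) (fun _ _ => Nat.zero_le _) hmem
  omega

lemma sum_insert_sub_sum_of_two_mul_sum_lt {A : Finset ℕ} {N : ℕ} (h : 2 * A.sum id < N) :
    (insert (N - A.sum id) A).sum id = N := by
  rw [sum_insert (sub_sum_notMem_of_two_mul_sum_lt h)]
  exact Nat.sub_add_cancel (by omega)

lemma sum_dvd_factorial {B : Finset ℕ} (hne : B.Nonempty) (hpos : ∀ b ∈ B, 0 < b) {N : ℕ}
    (hN : B.sum id ≤ N) : B.sum id ∣ N ! :=
  Nat.dvd_factorial (sum_pos hpos hne) hN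

end Finset

open Finset in
theorem stmt_3_general (A' : Finset ℕ)
    (hpos : ∀ a ∈ A', 0 < a) :
    ∃ a : ℕ, 0 < a ∧ a ∉ A' ∧
      ∀ B ⊆ A', B.Nonempty → B.sum id ∣ (insert a A').sum id := by
  set S := A'.sum id
  have hlt : 2 * S < (2 * S + 1)! := Nat.lt_of_succ_le (Nat.self_le_factorial _)
  refine ⟨(2 * S + 1)! - S, by omega, sub_sum_notMem_of_two_mul_sum_lt hlt, fun B hB hne => ?_⟩
  rw [sum_insert_sub_sum_of_two_mul_sum_lt hlt]
  have hBS : B.sum id ≤ S := sum_le_sum_of_subset hB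
  exact sum_dvd_factorial hne (fun b hb => hpos b (hB hb)) (by omega)

/-- For `n ≥ 2` and any set `A'` of `n - 1` positive integers, there is a positive integer
`a ∉ A'` such that every nonempty subset of `A'` is a divisor of `A' ∪ {a}`. -/
theorem stmt_3 (n : ℕ) (hn : 2 ≤ n) (A' : Finset ℕ) (hcard : A'.card = n - 1)
    (hpos : ∀ a ∈ A', 0 < a) :
    ∃ a : ℕ, 0 < a ∧ a ∉ A' ∧
      ∀ B ⊆ A', B.Nonempty → B.sum id ∣ (insert a A').sum id :=
  stmt_3_general A' hpos
end

section
/- For all positive integers k and n with k ≤ n-1, there exists a set A of n positive integers such that the number of k-element divisors of A is at least binomial(n-1, k). -/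
/-!
Take `F = {1, …, n - 1}` with sum `T` and add the element `x = (2T + 1)! - T`, so that the total
sum becomes `(2T + 1)!`. Every nonempty subset of `F` has sum between `1` and `T`, hence divides
`(2T + 1)!`; so all `(n - 1).choose k` of the `k`-subsets of `F` are divisors.
-/

open Finset Nat

/-- `(divisorsOfCard A k).card` is `d_k(A)`. -/
def divisorsOfCard (A : Finset ℕ) (k : ℕ) : Finset (Finset ℕ) :=
  A.powerset.filter (fun B => B.card = k ∧ B.sum id ∣ A.sum id)

lemma powersetCard_subset_divisorsOfCard_insert {F : Finset ℕ} {x k : ℕ}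
    (hF : ∀ a ∈ F, 0 < a) (hx : x ∉ F)
    (hdvd : ∀ d, 0 < d → d ≤ F.sum id → d ∣ F.sum id + x) (hk : 0 < k) :
    F.powersetCard k ⊆ divisorsOfCard (insert x F) k := by
  intro B hB
  obtain ⟨hBF, hBk⟩ := mem_powersetCard.mp hB
  have hB_pos : 0 < B.sum id :=
    sum_pos (fun b hb => hF b (hBF hb)) (card_pos.mp (hBk ▸ hk))
  refine mem_filter.mpr ⟨mem_powerset.mpr (hBF.trans (subset_insert _ _)), hBk, ?_⟩
  rw [sum_insert hx, add_comm]
  exact hdvd _ hB_pos (sum_le_sum_of_subset hBF)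

lemma exists_powersetCard_subset_divisorsOfCard_insert {F : Finset ℕ} (hF : ∀ a ∈ F, 0 < a) :
    ∃ x, 0 < x ∧ x ∉ F ∧ ∀ k, 0 < k → F.powersetCard k ⊆ divisorsOfCard (insert x F) k := by
  set T := F.sum id
  have hT : 2 * T + 1 ≤ (2 * T + 1)! := Nat.self_le_factorial _
  have hle : ∀ a ∈ F, a ≤ T := fun a ha => single_le_sum (f := id) (fun _ _ => Nat.zero_le _) ha
  refine ⟨(2 * T + 1)! - T, by omega, fun hmem => ?_, fun k hk => ?_⟩
  · have := hle _ hmem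
    omega
  · refine powersetCard_subset_divisorsOfCard_insert hF
      (fun hmem => by have := hle _ hmem; omega) (fun d hd hdT => ?_) hk
    rw [Nat.add_sub_cancel' (by omega)]
    exact Nat.dvd_factorial hd (by omega)

theorem stmt_4_general (k n : ℕ) (hk : 0 < k) (hn : 0 < n) :
    ∃ A : Finset ℕ, A.card = n ∧ (∀ a ∈ A, 0 < a) ∧
      (n - 1).choose k ≤
        (A.powerset.filter (fun B => B.card = k ∧ B.sum id ∣ A.sum id)).card := by
  have hF : ∀ a ∈ Icc 1 (n - 1), 0 < a := fun a ha => (mem_Icc.mp ha).1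
  obtain ⟨x, hx_pos, hx, hsub⟩ := exists_powersetCard_subset_divisorsOfCard_insert hF
  refine ⟨insert x (Icc 1 (n - 1)), ?_, ?_, ?_⟩
  · rw [card_insert_of_notMem hx, Nat.card_Icc]
    omega
  · simpa [hx_pos] using hF
  · calc (n - 1).choose k = ((Icc 1 (n - 1)).powersetCard k).card := by simp
      _ ≤ (divisorsOfCard (insert x (Icc 1 (n - 1))) k).card := card_le_card (hsub k hk)

/-- For all positive integers `k ≤ n - 1`, there exists a set of `n` positive integers with at
least `(n - 1).choose k` divisors of size `k`. -/
theorem stmt_4 (k n : ℕ) (hk : 0 < k) (hn : 0 < n) (hkn : k ≤ n - 1) :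
    ∃ A : Finset ℕ, A.card = n ∧ (∀ a ∈ A, 0 < a) ∧
      (n - 1).choose k ≤
        (A.powerset.filter (fun B => B.card = k ∧ B.sum id ∣ A.sum id)).card :=
  stmt_4_general k n hk hn
end

section
/- For each positive integer n, there exist infinitely many prime sets of n positive integers; that is, for every positive integer m there exists a set A of n positive integers whose elements all exceed m such that the only divisor of A is A itself. -/
/-!
Take the `n - 1` consecutive integers `m + 1, …, m + n - 1` with sum `s`, and add `p - s` for a
prime `p` large enough that `p - s ≥ m + n`. The resulting `n`-set has prime sum `p`; since all its
elements exceed `1`, a nonempty subset has sum `> 1`, so a subset sum dividing `p` equals `p`, and a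
proper subset of positive integers has strictly smaller sum.
-/

open Finset

theorem Finset.eq_of_subset_of_sum_dvd_of_prime {ι : Type*} {f : ι → ℕ} {A B : Finset ι}
    (hf : ∀ a ∈ A, 1 < f a) (hp : (∑ a ∈ A, f a).Prime) (hBA : B ⊆ A) (hB : B.Nonempty)
    (hdvd : ∑ b ∈ B, f b ∣ ∑ a ∈ A, f a) : B = A := by
  by_contra hne
  obtain ⟨i, hiA, hiB⟩ := exists_of_ssubset (ssubset_of_subset_of_ne hBA hne)
  have hlt : ∑ b ∈ B, f b < ∑ a ∈ A, f a :=
    sum_lt_sum_of_subset hBA hiA hiB (by linarith [hf i hiA]) fun _ _ _ => Nat.zero_le _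
  obtain ⟨b, hb⟩ := hB
  have hgt : 1 < ∑ b ∈ B, f b :=
    (hf b (hBA hb)).trans_le (single_le_sum (fun _ _ => Nat.zero_le _) hb)
  rcases hp.eq_one_or_self_of_dvd _ hdvd with h | h <;> omega

theorem exists_card_eq_forall_lt_sum_prime (n : ℕ) (hn : 0 < n) (m : ℕ) :
    ∃ A : Finset ℕ, A.card = n ∧ (∀ a ∈ A, m < a) ∧ (∑ a ∈ A, a).Prime := by
  set C := Ico (m + 1) (m + n)
  obtain ⟨p, hp_ge, hp⟩ := Nat.exists_infinite_primes (∑ c ∈ C, c + m + n)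
  set x := p - ∑ c ∈ C, c
  have hC_lt : ∀ c ∈ C, m < c ∧ c < x := fun c hc => by
    have := mem_Ico.mp hc
    omega
  have hxC : x ∉ C := fun hx => (hC_lt x hx).2.false
  refine ⟨insert x C, ?_, ?_, ?_⟩
  · rw [card_insert_of_notMem hxC, Nat.card_Ico]
    omega
  · simp only [mem_insert, forall_eq_or_imp]
    exact ⟨by omega, fun c hc => (hC_lt c hc).1⟩
  · rwa [sum_insert hxC, Nat.sub_add_cancel (by omega)]

/-- For each positive `n` there are infinitely many prime `n`-sets: for every positive integer
`m` there is a set `A` of `n` positive integers, all exceeding `m`, whose only divisor is `A`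
itself. -/
theorem stmt_5 (n : ℕ) (hn : 0 < n) (m : ℕ) (hm : 0 < m) :
    ∃ A : Finset ℕ, A.card = n ∧ (∀ a ∈ A, m < a) ∧
      ∀ B ⊆ A, B.Nonempty → B.sum id ∣ A.sum id → B = A := by
  obtain ⟨A, hcard, hlt, hprime⟩ := exists_card_eq_forall_lt_sum_prime n hn m
  have h_one_lt : ∀ a ∈ A, 1 < id a := fun a ha => lt_of_le_of_lt hm (hlt a ha)
  exact ⟨A, hcard, hlt, fun B hBA hB hdvd =>
    eq_of_subset_of_sum_dvd_of_prime h_one_lt hprime hBA hB hdvd⟩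
end

section
/- Let A be a set of n positive integers and let h be the number of unordered pairs {B, A\B} such that B is a halving set of A (equivalently, 2h is the number of halving sets of A). Then the number of divisors of A is at most 2^(n-1) + h. -/
/-!
If a set `B ⊆ A` and its complement `A \ B` are both divisors of `A`, their sums `s` and `t`
divide `s + t`, hence each other, so `s = t` and `B` is a halving set. Thus among the `2 ^ (n - 1)`
pairs `{B, A \ B}` only the `h` halving pairs can contribute two divisors.
-/

open Finset

theorem Nat.eq_of_dvd_add_of_dvd_add {s t : ℕ} (hs : s ∣ s + t) (ht : t ∣ s + t) : s = t :=
  Nat.dvd_antisymm (Nat.dvd_add_self_left.mp hs) (Nat.dvd_add_self_right.mp ht)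

theorem Finset.two_mul_card_le_of_subset_powerset {α : Type*} [DecidableEq α] {A : Finset α}
    {D : Finset (Finset α)} (hD : D ⊆ A.powerset) :
    2 * #D ≤ 2 ^ #A + #(D.filter fun B => A \ B ∈ D) := by
  set D' := D.image (A \ ·)
  have hcompl_compl : ∀ B ∈ D, A \ (A \ B) = B := fun B hB =>
    sdiff_sdiff_eq_self (mem_powerset.mp (hD hB))
  have hcard_image : #D' = #D :=
    card_image_of_injOn fun B hB C hC hBC => by
      rw [← hcompl_compl B hB, ← hcompl_compl C hC]
      exact congrArg (A \ ·) hBC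
  have hunion : D ∪ D' ⊆ A.powerset := union_subset hD fun B hB => by
    obtain ⟨C, -, rfl⟩ := mem_image.mp hB
    exact mem_powerset.mpr sdiff_subset
  have hinter : D ∩ D' ⊆ D.filter fun B => A \ B ∈ D := fun B hB => by
    obtain ⟨hBD, hBD'⟩ := mem_inter.mp hB
    obtain ⟨C, hC, rfl⟩ := mem_image.mp hBD'
    exact mem_filter.mpr ⟨hBD, by rwa [hcompl_compl C hC]⟩
  have := card_union_add_card_inter D D'
  have := card_le_card hunion
  have := card_le_card hinter
  rw [card_powerset] at *
  omega

theorem Finset.two_mul_sum_eq_of_dvd_sum_of_dvd_sum_sdiff {A B : Finset ℕ} (hBA : B ⊆ A)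
    (hB : B.sum id ∣ A.sum id) (hB' : (A \ B).sum id ∣ A.sum id) : 2 * B.sum id = A.sum id := by
  have hsum : B.sum id + (A \ B).sum id = A.sum id := by rw [add_comm, sum_sdiff hBA]
  rw [← hsum] at hB hB'
  rw [← hsum, Nat.eq_of_dvd_add_of_dvd_add hB hB']
  ring

theorem stmt_7_general (n : ℕ) (A : Finset ℕ) (hcard : A.card = n)
    (h : ℕ) (hh : 2 * h = (A.powerset.filter (fun B => 2 * B.sum id = A.sum id)).card) :
    (A.powerset.filter (fun B => B.Nonempty ∧ B.sum id ∣ A.sum id)).card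
      ≤ 2 ^ (n - 1) + h := by
  set D := A.powerset.filter (fun B => B.Nonempty ∧ B.sum id ∣ A.sum id)
  have hcount : 2 * #D ≤ 2 ^ n + #(D.filter fun B => A \ B ∈ D) :=
    hcard ▸ two_mul_card_le_of_subset_powerset (filter_subset _ _)
  have hpairs : (D.filter fun B => A \ B ∈ D) ⊆
      A.powerset.filter (fun B => 2 * B.sum id = A.sum id) := by
    intro B hB
    simp only [D, mem_filter, mem_powerset] at hB ⊢
    obtain ⟨⟨hBA, -, hBdvd⟩, -, -, hB'dvd⟩ := hB
    exact ⟨hBA, two_mul_sum_eq_of_dvd_sum_of_dvd_sum_sdiff hBA hBdvd hB'dvd⟩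
  have hpow : 2 ^ n ≤ 2 * 2 ^ (n - 1) := by
    rw [← pow_succ']
    exact Nat.pow_le_pow_right two_pos (by omega)
  have := card_le_card hpairs
  omega

/-- If `A` is a set of `n` positive integers and `2 * h` is the number of halving sets of `A`,
then `A` has at most `2 ^ (n - 1) + h` divisors. -/
theorem stmt_7 (n : ℕ) (A : Finset ℕ) (hcard : A.card = n) (hpos : ∀ a ∈ A, 0 < a)
    (h : ℕ) (hh : 2 * h = (A.powerset.filter (fun B => 2 * B.sum id = A.sum id)).card) :
    (A.powerset.filter (fun B => B.Nonempty ∧ B.sum id ∣ A.sum id)).card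
      ≤ 2 ^ (n - 1) + h :=
  stmt_7_general n A hcard h hh
end

section
/- Let A be a set of 2n positive integers and let h be the number of unordered pairs {B, A\B} with |B| = n such that B is a halving set of A (equivalently, 2h is the number of n-element halving sets of A). Then the number of n-element divisors of A is at most (1/2)·binomial(2n, n) + h. -/
/-!
Taking complements in `A` is an involution on the `n`-element subsets of `A`. Since
`∑ B + ∑ (A \ B) = ∑ A`, the sum of `B` divides `∑ A` exactly when it divides the sum of
`A \ B`; so if both `B` and `A \ B` are divisors, their sums divide each other and are equal,
i.e. `B` is a halving set. Hence complementation maps the non-halving `n`-element divisors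
injectively to `n`-element non-divisors, which gives `d_n(A) - 2h ≤ binom(2n, n) - d_n(A)`.
-/

open Finset

lemma Finset.two_mul_card_le_card_add_card {β : Type*} [DecidableEq β] {P D H : Finset β}
    (hHD : H ⊆ D) (hDP : D ⊆ P) (f : β → β) (hmaps : Set.MapsTo f ↑(D \ H) ↑(P \ D))
    (hinj : Set.InjOn f ↑(D \ H)) : 2 * #D ≤ #P + #H := by
  have hle : #(D \ H) ≤ #(P \ D) := card_le_card_of_injOn f hmaps hinj
  rw [card_sdiff_of_subset hHD, card_sdiff_of_subset hDP] at hle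
  have := card_le_card hHD
  have := card_le_card hDP
  omega

section Complement

variable {α : Type*} [DecidableEq α] {A B : Finset α}

lemma Finset.two_mul_sum_eq_of_dvd_of_dvd_sum_sdiff (f : α → ℕ) (hBA : B ⊆ A)
    (hB : ∑ b ∈ B, f b ∣ ∑ a ∈ A, f a) (hAB : ∑ c ∈ A \ B, f c ∣ ∑ a ∈ A, f a) :
    2 * ∑ b ∈ B, f b = ∑ a ∈ A, f a := by
  rw [← sum_sdiff hBA] at hB hAB ⊢
  have hsum : ∑ b ∈ B, f b = ∑ c ∈ A \ B, f c :=
    Nat.dvd_antisymm (Nat.dvd_add_self_right.mp hB) (Nat.dvd_add_self_left.mp hAB)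
  omega

lemma Finset.injOn_sdiff_powerset : Set.InjOn (A \ ·) ↑A.powerset := by
  intro B₁ h₁ B₂ h₂ heq
  rw [coe_powerset, Set.mem_preimage, Set.mem_powerset_iff, coe_subset] at h₁ h₂
  rw [← sdiff_sdiff_eq_self h₁, ← sdiff_sdiff_eq_self h₂]
  exact congrArg (A \ ·) heq

end Complement

theorem stmt_8_general (n : ℕ) (A : Finset ℕ) (hcard : A.card = 2 * n)
    (h : ℕ)
    (hh : 2 * h =
      (A.powerset.filter (fun B => B.card = n ∧ 2 * B.sum id = A.sum id)).card) :
    2 * (A.powerset.filter (fun B => B.card = n ∧ B.sum id ∣ A.sum id)).card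
      ≤ (2 * n).choose n + 2 * h := by
  rw [← hcard, ← card_powersetCard, powersetCard_eq_filter, hh]
  refine two_mul_card_le_card_add_card ?_ ?_ (A \ ·) ?_ (injOn_sdiff_powerset.mono ?_)
  · exact monotone_filter_right _ fun B _ hB => ⟨hB.1, Dvd.intro_left 2 hB.2⟩
  · exact monotone_filter_right _ fun B _ hB => hB.1
  · intro B hB
    simp only [coe_sdiff, coe_filter, Set.mem_sdiff, Set.mem_ofPred_eq, mem_powerset] at hB ⊢
    obtain ⟨⟨hBA, hBn, hBdvd⟩, hnot⟩ := hB
    have hcompl : #(A \ B) = n := by rw [card_sdiff_of_subset hBA]; omega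
    exact ⟨⟨sdiff_subset, hcompl⟩, fun ⟨_, _, hdvd⟩ =>
      hnot ⟨hBA, hBn, two_mul_sum_eq_of_dvd_of_dvd_sum_sdiff id hBA hBdvd hdvd⟩⟩
  · exact fun B hB => (filter_subset _ _) (mem_sdiff.mp hB).1

/-- If `A` is a set of `2n` positive integers and `2 * h` is the number of `n`-element halving
sets of `A`, then `A` has at most `(1/2) * (2n).choose n + h` divisors of size `n`. -/
theorem stmt_8 (n : ℕ) (A : Finset ℕ) (hcard : A.card = 2 * n) (hpos : ∀ a ∈ A, 0 < a)
    (h : ℕ)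
    (hh : 2 * h =
      (A.powerset.filter (fun B => B.card = n ∧ 2 * B.sum id = A.sum id)).card) :
    2 * (A.powerset.filter (fun B => B.card = n ∧ B.sum id ∣ A.sum id)).card
      ≤ (2 * n).choose n + 2 * h :=
  stmt_8_general n A hcard h hh
end

section
/- Every set of 3 positive integers has at most 5 divisors, and a set A of 3 positive integers has exactly 5 divisors if and only if A = {a, 2a, 3a} for some positive integer a. -/
/-!
Write `A = {x, y, z}` with `x < y < z` and `s = x + y + z`. The two-element subsets containing `z`
have sum strictly between `s / 2` and `s`, so they never divide `s`; the remaining five nonempty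
subsets give `d(A) ≤ 5`. If all five divide `s`, then `z ∣ x + y < 2z` forces `z = x + y`, and then
`y ∣ 2x + 2y`, i.e. `y ∣ 2x < 2y`, forces `y = 2x`.
-/

theorem Finset.exists_lt_lt_eq_of_card_eq_three {α : Type*} [LinearOrder α] {A : Finset α}
    (h : A.card = 3) : ∃ x y z, x < y ∧ y < z ∧ A = {x, y, z} := by
  set f := A.orderEmbOfFin h
  refine ⟨f 0, f 1, f 2, f.strictMono (by decide), f.strictMono (by decide), ?_⟩
  rw [← coe_inj, ← range_orderEmbOfFin A h]
  ext a
  simp only [Set.mem_range, Fin.exists_fin_succ, Fin.exists_fin_zero, coe_insert, coe_singleton,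
    Set.mem_insert_iff, Set.mem_singleton_iff]
  simp [f, eq_comm]

theorem Finset.subset_triple_iff_eq {α : Type*} [DecidableEq α] {x y z : α} {B : Finset α} :
    B ⊆ {x, y, z} ↔ B = ∅ ∨ B = {x} ∨ B = {y} ∨ B = {z} ∨ B = {x, y} ∨ B = {x, z} ∨ B = {y, z} ∨
      B = {x, y, z} := by
  constructor
  · rw [← mem_powerset]
    simp only [powerset_insert, union_assoc, mem_union, mem_powerset, subset_singleton_iff,
      mem_image, exists_eq_or_imp, insert_empty_eq, existsAndEq, true_and]
    grind
  · rintro (rfl | rfl | rfl | rfl | rfl | rfl | rfl | rfl) <;> simp [subset_iff]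

theorem Finset.card_five_subsets_triple {α : Type*} [DecidableEq α] {x y z : α} (hxy : x ≠ y)
    (hxz : x ≠ z) (hyz : y ≠ z) :
    ({{x}, {y}, {z}, {x, y}, {x, y, z}} : Finset (Finset α)).card = 5 := by
  have hne : ∀ S T : Finset α, S.card ≠ T.card → S ≠ T := fun S T h e => h (congrArg _ e)
  rw [card_insert_of_notMem, card_insert_of_notMem, card_insert_of_notMem, card_insert_of_notMem,
    card_singleton] <;>
  simp [hxy, hxz, hyz, hne]

def setDivisors (A : Finset ℕ) : Finset (Finset ℕ) :=
  A.powerset.filter (fun B => B.Nonempty ∧ B.sum id ∣ A.sum id)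

section Triple

variable {x y z : ℕ}

theorem sum_id_triple (hxy : x < y) (hyz : y < z) : ({x, y, z} : Finset ℕ).sum id = x + y + z := by
  rw [Finset.sum_insert (by simp; omega), Finset.sum_pair hyz.ne, add_assoc]; rfl

theorem eq_two_mul_and_eq_three_mul_of_dvd (hx : 0 < x) (hxy : x < y) (hyz : y < z)
    (hy : y ∣ x + y + z) (hz : z ∣ x + y + z) : y = 2 * x ∧ z = 3 * x := by
  have hz' : x + y = z :=
    Nat.eq_of_dvd_of_lt_two_mul (by omega) (Nat.dvd_add_self_right.mp hz) (by omega)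
  have hy' : 2 * x = y := by
    rw [show x + y + z = 2 * x + 2 * y by omega] at hy
    exact Nat.eq_of_dvd_of_lt_two_mul (by omega) ((Nat.dvd_add_left (dvd_mul_left y 2)).mp hy)
      (by omega)
  omega

theorem setDivisors_triple (hx : 0 < x) (hxy : x < y) (hyz : y < z) :
    setDivisors {x, y, z} =
      ({{x}, {y}, {z}, {x, y}, {x, y, z}} : Finset (Finset ℕ)).filter (·.sum id ∣ x + y + z) := by
  ext B
  simp only [setDivisors, Finset.mem_filter, Finset.mem_powerset, sum_id_triple hxy hyz]
  constructor
  · rintro ⟨hB, hne, hdvd⟩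
    rcases Finset.subset_triple_iff_eq.mp hB with rfl | rfl | rfl | rfl | rfl | rfl | rfl | rfl
    · simp at hne
    iterate 4 exact ⟨by simp, hdvd⟩
    -- the sums of `{x, z}` and `{y, z}` lie strictly between `(x + y + z) / 2` and `x + y + z`
    iterate 2
      rw [Finset.sum_pair (by omega)] at hdvd
      exact absurd hdvd
        (Nat.not_dvd_of_lt_of_lt_mul_succ (k := 1) (by simp; omega) (by simp; omega))
    exact ⟨by simp, hdvd⟩
  · rintro ⟨hB, hdvd⟩
    simp only [Finset.mem_insert, Finset.mem_singleton] at hB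
    refine ⟨?_, ?_, hdvd⟩ <;> rcases hB with rfl | rfl | rfl | rfl | rfl <;> simp [Finset.subset_iff]

theorem card_setDivisors_triple_le_five (hx : 0 < x) (hxy : x < y) (hyz : y < z) :
    (setDivisors {x, y, z}).card ≤ 5 := by
  rw [setDivisors_triple hx hxy hyz]
  exact (Finset.card_filter_le _ _).trans
    (Finset.card_five_subsets_triple hxy.ne (hxy.trans hyz).ne hyz.ne).le

theorem card_setDivisors_triple_eq_five_iff (hx : 0 < x) (hxy : x < y) (hyz : y < z) :
    (setDivisors {x, y, z}).card = 5 ↔ y = 2 * x ∧ z = 3 * x := by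
  rw [setDivisors_triple hx hxy hyz,
    ← Finset.card_five_subsets_triple hxy.ne (hxy.trans hyz).ne hyz.ne, Finset.card_filter_eq_iff]
  simp only [Finset.mem_insert, Finset.mem_singleton, forall_eq_or_imp, forall_eq,
    Finset.sum_singleton, Finset.sum_pair hxy.ne, id_eq]
  constructor
  · rintro ⟨-, hy, hz, -⟩
    exact eq_two_mul_and_eq_three_mul_of_dvd hx hxy hyz hy hz
  · rintro ⟨rfl, rfl⟩
    exact ⟨⟨6, by ring⟩, ⟨3, by ring⟩, ⟨2, by ring⟩, ⟨2, by ring⟩, dvd_of_eq (sum_id_triple hxy hyz)⟩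

end Triple

theorem card_setDivisors_le_five {A : Finset ℕ} (hA : A.card = 3) (hpos : ∀ a ∈ A, 0 < a) :
    (setDivisors A).card ≤ 5 := by
  obtain ⟨x, y, z, hxy, hyz, rfl⟩ := Finset.exists_lt_lt_eq_of_card_eq_three hA
  exact card_setDivisors_triple_le_five (hpos x (by simp)) hxy hyz

theorem card_setDivisors_eq_five_iff {A : Finset ℕ} (hA : A.card = 3) (hpos : ∀ a ∈ A, 0 < a) :
    (setDivisors A).card = 5 ↔ ∃ a, 0 < a ∧ A = {a, 2 * a, 3 * a} := by
  obtain ⟨x, y, z, hxy, hyz, rfl⟩ := Finset.exists_lt_lt_eq_of_card_eq_three hA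
  have hx : 0 < x := hpos x (by simp)
  rw [card_setDivisors_triple_eq_five_iff hx hxy hyz]
  constructor
  · rintro ⟨rfl, rfl⟩
    exact ⟨x, hx, rfl⟩
  · rintro ⟨a, -, hA⟩
    have mem : ∀ b ∈ ({x, y, z} : Finset ℕ), b = a ∨ b = 2 * a ∨ b = 3 * a := by
      simp [hA]
    have hxa := mem x (by simp)
    have hya := mem y (by simp)
    have hza := mem z (by simp)
    omega

/-- Every set of 3 positive integers has at most 5 divisors, with equality exactly for the sets
`{a, 2a, 3a}`. -/
theorem stmt_10 :
    (∀ A : Finset ℕ, A.card = 3 → (∀ a ∈ A, 0 < a) →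
      (A.powerset.filter (fun B => B.Nonempty ∧ B.sum id ∣ A.sum id)).card ≤ 5) ∧
    (∀ A : Finset ℕ, A.card = 3 → (∀ a ∈ A, 0 < a) →
      ((A.powerset.filter (fun B => B.Nonempty ∧ B.sum id ∣ A.sum id)).card = 5 ↔
        ∃ a : ℕ, 0 < a ∧ A = {a, 2 * a, 3 * a})) :=
  ⟨fun _ hA hpos => card_setDivisors_le_five hA hpos,
    fun _ hA hpos => card_setDivisors_eq_five_iff hA hpos⟩
end

section
/- For every n ≥ 3 and every set A of 2n positive integers, the number of n-element divisors of A is at most (1/2)·binomial(2n, n). Consequently, for n ≥ 3 the maximum number of n-element divisors over all sets of 2n positive integers equals (1/2)·binomial(2n, n). -/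
/-!
Write `S = ΣA`. Complementation `B ↦ A \ B` pairs up the `n`-subsets of `A`. If both `ΣB` and
`Σ(A \ B)` divide `S`, they are positive divisors adding up to `S`, so each equals `S/2`. Hence
`2 d_n(A) ≤ C(2n, n) - N + Bal`, where `Bal` counts the balanced subsets (`2ΣB = S`) and `N` the
subsets `B` for which neither `B` nor `A \ B` is a divisor.

To see `Bal ≤ N`, take a balanced `D` avoiding `min A` (one of `B`, `A \ B` does) and replace
`min D` by the largest element of `A` below it. This is injective, and as `n ≥ 3` the sum of the
result lies strictly between `S/3` and `S/2`, so neither it nor its complement is a divisor; the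
complements give a second, disjoint copy inside `N`.

For equality, add to `R = {1, …, 2n-1}` an element making `ΣA` a multiple of every `n`-subset sum
of `R` and larger than `2ΣR`: then the `n`-divisors are exactly the `n`-subsets of `R`, and
`2 C(2n-1, n) = C(2n, n)`.
-/

open Finset

lemma Nat.two_mul_le_of_dvd_of_lt_s11 {a s : ℕ} (h : a ∣ s) (hlt : a < s) : 2 * a ≤ s := by
  by_contra! h'
  exact Nat.not_dvd_of_lt_of_lt_mul_succ (k := 1) (by omega) (by omega) h

lemma Nat.eq_of_dvd_of_dvd_of_add_eq {a b s : ℕ} (hs : 0 < s) (ha : a ∣ s) (hb : b ∣ s)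
    (hab : a + b = s) : a = b := by
  have ha0 : a ≠ 0 := by rintro rfl; exact hs.ne' (zero_dvd_iff.mp ha)
  have hb0 : b ≠ 0 := by rintro rfl; exact hs.ne' (zero_dvd_iff.mp hb)
  have := Nat.two_mul_le_of_dvd_of_lt_s11 ha (by omega)
  have := Nat.two_mul_le_of_dvd_of_lt_s11 hb (by omega)
  omega

lemma Nat.two_mul_choose_two_mul_sub_one {n : ℕ} (hn : 0 < n) :
    2 * (2 * n - 1).choose n = (2 * n).choose n := by
  obtain ⟨m, rfl⟩ : ∃ m, n = m + 1 := ⟨n - 1, by omega⟩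
  rw [show 2 * (m + 1) - 1 = 2 * m + 1 by omega, show 2 * (m + 1) = 2 * m + 1 + 1 by ring,
    Nat.choose_succ_succ' (2 * m + 1) m, Nat.choose_symm_half]
  ring

namespace Finset

section Complement

variable {α : Type*} [DecidableEq α] {A B : Finset α}

lemma sdiff_mem_powersetCard {n : ℕ} (hA : #A = 2 * n) (hB : B ∈ A.powersetCard n) :
    A \ B ∈ A.powersetCard n := by
  rw [mem_powersetCard] at hB ⊢
  exact ⟨sdiff_subset, by rw [card_sdiff_of_subset hB.1, hA, hB.2]; omega⟩

lemma card_image_sdiff {F : Finset (Finset α)} (hF : ∀ C ∈ F, C ⊆ A) :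
    #(F.image (A \ ·)) = #F :=
  card_image_of_injOn fun C hC C' hC' h => by
    rw [← sdiff_sdiff_eq_self (hF C hC), ← sdiff_sdiff_eq_self (hF C' hC')]
    exact congrArg (A \ ·) h

lemma mem_image_sdiff {F : Finset (Finset α)} (hF : ∀ C ∈ F, C ⊆ A) (hB : B ⊆ A) :
    B ∈ F.image (A \ ·) ↔ A \ B ∈ F := by
  constructor
  · rw [mem_image]
    rintro ⟨C, hC, rfl⟩
    rwa [sdiff_sdiff_eq_self (hF C hC)]
  · exact fun h => mem_image.mpr ⟨A \ B, h, sdiff_sdiff_eq_self hB⟩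

end Complement

lemma three_mul_add_two_le_sum {D : Finset ℕ} {x : ℕ} (hx : IsLeast (D : Set ℕ) x)
    (hD : 3 ≤ #D) : 3 * x + 2 ≤ D.sum id := by
  have hx' : x ∈ D := hx.1
  have hrest : #(D.erase x) • (x + 1) ≤ (D.erase x).sum id := card_nsmul_le_sum _ _ _
    fun a ha => lt_of_le_of_ne (hx.2 (mem_of_mem_erase ha)) (ne_of_mem_erase ha).symm
  rw [card_erase_of_mem hx', smul_eq_mul] at hrest
  have hsplit := sum_erase_add D id hx'
  have : 2 * (x + 1) ≤ (#D - 1) * (x + 1) := Nat.mul_le_mul_right _ (by omega)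
  simp only [id] at hsplit hrest ⊢
  omega

lemma isLeast_insert_erase {α : Type*} [LinearOrder α] {D : Finset α} {x y : α}
    (hx : IsLeast (D : Set α) x) (hyx : y < x) :
    IsLeast (insert y (D.erase x) : Finset α) y := by
  refine ⟨by simp, fun a ha => ?_⟩
  rcases mem_insert.mp (mem_coe.mp ha) with rfl | ha
  · exact le_rfl
  · exact hyx.le.trans (hx.2 (mem_of_mem_erase ha))

lemma notMem_erase_of_isLeast_of_lt {α : Type*} [LinearOrder α] {D : Finset α} {x y : α}
    (hx : IsLeast (D : Set α) x) (hyx : y < x) : y ∉ D.erase x :=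
  fun h => not_le.mpr hyx (hx.2 (mem_of_mem_erase h))

section LowerMin

variable {A D : Finset ℕ}

noncomputable def lowerMin (A D : Finset ℕ) : Finset ℕ :=
  insert ((A.filter (· < sInf (D : Set ℕ))).sup id) (D.erase (sInf (D : Set ℕ)))

lemma lowerMin_spec (hDA : D ⊆ A) (hD : D.Nonempty) (hmin : sInf (A : Set ℕ) ∉ D) :
    ∃ x y, IsLeast (D : Set ℕ) x ∧ y ∈ A ∧ y < x ∧ IsLeast {a | a ∈ A ∧ y < a} x ∧
      lowerMin A D = insert y (D.erase x) := by
  set x := sInf (D : Set ℕ)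
  have hx : IsLeast (D : Set ℕ) x :=
    ⟨Nat.sInf_mem (coe_nonempty.mpr hD), fun a ha => Nat.sInf_le ha⟩
  have hmA : sInf (A : Set ℕ) ∈ A := Nat.sInf_mem (coe_nonempty.mpr (hD.mono hDA))
  have hmx : sInf (A : Set ℕ) < x :=
    lt_of_le_of_ne (Nat.sInf_le (hDA hx.1)) fun h => hmin (h ▸ hx.1)
  obtain ⟨y, hyP, hy⟩ :=
    exists_mem_eq_sup (A.filter (· < x)) ⟨_, mem_filter.mpr ⟨hmA, hmx⟩⟩ id
  rw [mem_filter] at hyP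
  refine ⟨x, y, hx, hyP.1, hyP.2, ⟨⟨hDA hx.1, hyP.2⟩, fun a ⟨ha, hya⟩ => ?_⟩,
    by rw [lowerMin, hy]; rfl⟩
  by_contra! hax
  have : a ≤ y := by
    simpa [hy] using le_sup (f := id) (mem_filter.mpr ⟨ha, hax⟩ : a ∈ A.filter (· < x))
  omega

lemma lowerMin_injOn :
    Set.InjOn (lowerMin A) {D | D ⊆ A ∧ D.Nonempty ∧ sInf (A : Set ℕ) ∉ D} := by
  rintro D ⟨hDA, hD, hmin⟩ D' ⟨hDA', hD', hmin'⟩ h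
  obtain ⟨x, y, hx, -, hyx, hxy, hC⟩ := lowerMin_spec hDA hD hmin
  obtain ⟨x', y', hx', -, hyx', hxy', hC'⟩ := lowerMin_spec hDA' hD' hmin'
  have hy : y = y' := (isLeast_insert_erase hx hyx).unique
    (by rw [← hC, h, hC']; exact isLeast_insert_erase hx' hyx')
  subst hy
  have hx : x = x' := hxy.unique hxy'
  subst hx
  have recover : ∀ {D : Finset ℕ}, IsLeast (D : Set ℕ) x →
      D = insert x ((insert y (D.erase x)).erase y) := fun hx => by
    rw [erase_insert (notMem_erase_of_isLeast_of_lt hx hyx), insert_erase hx.1]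
  rw [recover hx, recover hx', ← hC, ← hC', h]

lemma lowerMin_mem_powersetCard (hDA : D ⊆ A) (hD : D.Nonempty)
    (hmin : sInf (A : Set ℕ) ∉ D) :
    lowerMin A D ∈ A.powersetCard #D := by
  obtain ⟨x, y, hx, hyA, hyx, -, hC⟩ := lowerMin_spec hDA hD hmin
  have hy := notMem_erase_of_isLeast_of_lt hx hyx
  rw [hC, mem_powersetCard, card_insert_of_notMem hy, card_erase_of_mem hx.1,
    Nat.sub_add_cancel (card_pos.mpr hD)]
  exact ⟨insert_subset hyA ((erase_subset _ _).trans hDA), rfl⟩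

lemma sum_lowerMin_lt (hDA : D ⊆ A) (hD : 3 ≤ #D) (hmin : sInf (A : Set ℕ) ∉ D) :
    (lowerMin A D).sum id < D.sum id ∧ 2 * D.sum id < 3 * (lowerMin A D).sum id := by
  obtain ⟨x, y, hx, -, hyx, -, hC⟩ := lowerMin_spec hDA (card_pos.mp (by omega)) hmin
  have hy := notMem_erase_of_isLeast_of_lt hx hyx
  have hsum : (lowerMin A D).sum id + x = D.sum id + y := by
    rw [hC, sum_insert hy, ← sum_erase_add D id hx.1]
    simp only [id_eq]
    ring
  have := three_mul_add_two_le_sum hx hD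
  omega

end LowerMin

section Counting

variable {A : Finset ℕ} {n : ℕ}

def kDivisors (A : Finset ℕ) (k : ℕ) : Finset (Finset ℕ) :=
  (A.powersetCard k).filter fun B => B.sum id ∣ A.sum id

def balancedSubsets (A : Finset ℕ) (k : ℕ) : Finset (Finset ℕ) :=
  (A.powersetCard k).filter fun B => 2 * B.sum id = A.sum id

def bothNondivisors (A : Finset ℕ) (k : ℕ) : Finset (Finset ℕ) :=
  (A.powersetCard k).filter fun B => ¬ B.sum id ∣ A.sum id ∧ ¬ (A \ B).sum id ∣ A.sum id

lemma powerset_filter_eq_kDivisors (A : Finset ℕ) (k : ℕ) :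
    A.powerset.filter (fun B => B.card = k ∧ B.sum id ∣ A.sum id) = A.kDivisors k := by
  ext B
  simp only [kDivisors, mem_filter, mem_powerset, mem_powersetCard, and_assoc]

lemma sdiff_mem_bothNondivisors (hA : #A = 2 * n) {C : Finset ℕ}
    (hC : C ∈ A.bothNondivisors n) :
    A \ C ∈ A.bothNondivisors n := by
  rw [bothNondivisors, mem_filter] at hC ⊢
  have hCA : C ⊆ A := (mem_powersetCard.mp hC.1).1
  rw [sdiff_sdiff_eq_self hCA]
  exact ⟨sdiff_mem_powersetCard hA hC.1, hC.2.2, hC.2.1⟩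

lemma mem_bothNondivisors_of_lt {C : Finset ℕ} (hC : C ∈ A.powersetCard n)
    (hlow : A.sum id < 3 * C.sum id) (hhigh : 2 * C.sum id < A.sum id) :
    C ∈ A.bothNondivisors n := by
  have hsum : (A \ C).sum id + C.sum id = A.sum id := sum_sdiff (mem_powersetCard.mp hC).1
  refine mem_filter.mpr ⟨hC, Nat.not_dvd_of_lt_of_lt_mul_succ (k := 2) ?_ ?_,
    Nat.not_dvd_of_lt_of_lt_mul_succ (k := 1) ?_ ?_⟩ <;> omega

lemma two_mul_card_kDivisors_add_card_le (hA : #A = 2 * n) (hS : 0 < A.sum id) :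
    2 * #(A.kDivisors n) + #(A.bothNondivisors n) ≤
      (2 * n).choose n + #(A.balancedSubsets n) := by
  set D := A.kDivisors n
  set D' := D.image (A \ ·)
  have hDU : D ⊆ A.powersetCard n := filter_subset _ _
  have hDA : ∀ B ∈ D, B ⊆ A := fun B hB => (mem_powersetCard.mp (hDU hB)).1
  have hD'U : D' ⊆ A.powersetCard n := by
    simp only [D', image_subset_iff]
    exact fun B hB => sdiff_mem_powersetCard hA (hDU hB)
  have hinter : D ∩ D' ⊆ A.balancedSubsets n := by
    intro B hB
    obtain ⟨hBD, hBD'⟩ := mem_inter.mp hB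
    rw [mem_image_sdiff hDA (hDA B hBD)] at hBD'
    have hsum : (A \ B).sum id + B.sum id = A.sum id := sum_sdiff (hDA B hBD)
    have := Nat.eq_of_dvd_of_dvd_of_add_eq hS (mem_filter.mp hBD').2 (mem_filter.mp hBD).2 hsum
    exact mem_filter.mpr ⟨hDU hBD, by omega⟩
  have hdisj : Disjoint (D ∪ D') (A.bothNondivisors n) := by
    refine disjoint_left.mpr fun B hB hN => ?_
    obtain ⟨hBU, hB1, hB2⟩ := mem_filter.mp hN
    rcases mem_union.mp hB with hBD | hBD'
    · exact hB1 (mem_filter.mp hBD).2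
    · rw [mem_image_sdiff hDA (mem_powersetCard.mp hBU).1] at hBD'
      exact hB2 (mem_filter.mp hBD').2
  have hNU : A.bothNondivisors n ⊆ A.powersetCard n := filter_subset _ _
  have hcover := card_le_card (union_subset (union_subset hDU hD'U) hNU)
  rw [card_union_of_disjoint hdisj, card_powersetCard, hA] at hcover
  have := card_union_add_card_inter D D'
  have := card_le_card hinter
  have : #D' = #D := card_image_sdiff hDA
  omega

lemma mem_balancedSubsets {B : Finset ℕ} :
    B ∈ A.balancedSubsets n ↔ B ⊆ A ∧ #B = n ∧ 2 * B.sum id = A.sum id := by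
  simp only [balancedSubsets, mem_filter, mem_powersetCard, and_assoc]

lemma card_balancedSubsets_le_two_mul (hA : #A = 2 * n) :
    #(A.balancedSubsets n) ≤ 2 * #((A.balancedSubsets n).filter (sInf (A : Set ℕ) ∉ ·)) := by
  set Bout := (A.balancedSubsets n).filter (sInf (A : Set ℕ) ∉ ·)
  have hBoutA : ∀ B ∈ Bout, B ⊆ A := fun B hB =>
    (mem_balancedSubsets.mp (mem_filter.mp hB).1).1
  have hcover : A.balancedSubsets n ⊆ Bout ∪ Bout.image (A \ ·) := by
    intro B hB
    obtain ⟨hBA, hBn, hBS⟩ := mem_balancedSubsets.mp hB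
    by_cases hm : sInf (A : Set ℕ) ∈ B
    · have hsum : (A \ B).sum id + B.sum id = A.sum id := sum_sdiff hBA
      have hcompl : A \ B ∈ A.balancedSubsets n := mem_balancedSubsets.mpr
        ⟨sdiff_subset, by rw [card_sdiff_of_subset hBA]; omega, by omega⟩
      exact mem_union_right _ ((mem_image_sdiff hBoutA hBA).mpr
        (mem_filter.mpr ⟨hcompl, fun h => (mem_sdiff.mp h).2 hm⟩))
    · exact mem_union_left _ (mem_filter.mpr ⟨hB, hm⟩)
  calc #(A.balancedSubsets n) ≤ #(Bout ∪ Bout.image (A \ ·)) := card_le_card hcover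
    _ ≤ #Bout + #(Bout.image (A \ ·)) := card_union_le _ _
    _ = 2 * #Bout := by rw [card_image_sdiff hBoutA]; ring

lemma lowerMin_mem_bothNondivisors (hn : 3 ≤ n) {B : Finset ℕ} (hB : B ∈ A.balancedSubsets n)
    (hm : sInf (A : Set ℕ) ∉ B) :
    lowerMin A B ∈ A.bothNondivisors n ∧ 2 * (lowerMin A B).sum id < A.sum id := by
  obtain ⟨hBA, hBn, hBS⟩ := mem_balancedSubsets.mp hB
  have hmem := lowerMin_mem_powersetCard hBA (card_pos.mp (by omega)) hm
  have := sum_lowerMin_lt hBA (by omega) hm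
  rw [hBn] at hmem
  exact ⟨mem_bothNondivisors_of_lt hmem (by omega) (by omega), by omega⟩

lemma card_balancedSubsets_le (hn : 3 ≤ n) (hA : #A = 2 * n) :
    #(A.balancedSubsets n) ≤ #(A.bothNondivisors n) := by
  have hsplit := card_balancedSubsets_le_two_mul (n := n) hA
  set Bout := (A.balancedSubsets n).filter (sInf (A : Set ℕ) ∉ ·)
  set L := Bout.image (lowerMin A)
  have hL : #L = #Bout := card_image_of_injOn fun B hB B' hB' => by
    obtain ⟨hB, hm⟩ := mem_filter.mp (mem_coe.mp hB)
    obtain ⟨hB', hm'⟩ := mem_filter.mp (mem_coe.mp hB')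
    obtain ⟨hBA, hBn, -⟩ := mem_balancedSubsets.mp hB
    obtain ⟨hB'A, hB'n, -⟩ := mem_balancedSubsets.mp hB'
    exact lowerMin_injOn ⟨hBA, card_pos.mp (by omega), hm⟩
      ⟨hB'A, card_pos.mp (by omega), hm'⟩
  have hLN : ∀ C ∈ L, C ∈ A.bothNondivisors n ∧ 2 * C.sum id < A.sum id := by
    simp only [L, mem_image]
    rintro _ ⟨B, hB, rfl⟩
    exact lowerMin_mem_bothNondivisors hn (mem_filter.mp hB).1 (mem_filter.mp hB).2
  have hLA : ∀ C ∈ L, C ⊆ A := fun C hC =>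
    (mem_powersetCard.mp (mem_filter.mp (hLN C hC).1).1).1
  have hdisj : Disjoint L (L.image (A \ ·)) := by
    refine disjoint_left.mpr fun C hC hC' => ?_
    rw [mem_image_sdiff hLA (hLA C hC)] at hC'
    have hsum : (A \ C).sum id + C.sum id = A.sum id := sum_sdiff (hLA C hC)
    have := (hLN C hC).2
    have := (hLN _ hC').2
    omega
  have hsub : L ∪ L.image (A \ ·) ⊆ A.bothNondivisors n := by
    refine union_subset (fun C hC => (hLN C hC).1) ?_
    simp only [image_subset_iff]
    exact fun C hC => sdiff_mem_bothNondivisors hA (hLN C hC).1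
  have := card_le_card hsub
  rw [card_union_of_disjoint hdisj, card_image_sdiff hLA] at this
  omega

lemma exists_kDivisors_insert_eq_powersetCard {R : Finset ℕ} {k : ℕ} (hR : ∀ a ∈ R, 0 < a)
    (hk0 : 0 < k) (hk : k < #R) :
    ∃ f ∉ R, 0 < f ∧ (insert f R).kDivisors k = R.powersetCard k := by
  set T := R.sum id
  set L := ∏ B ∈ R.powersetCard k, B.sum id
  have hL : 0 < L := prod_pos fun B hB => by
    obtain ⟨hBR, hBk⟩ := mem_powersetCard.mp hB
    exact sum_pos (fun a ha => hR a (hBR ha)) (card_pos.mp (by omega))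
  have hTL : 2 * T + 1 ≤ (2 * T + 1) * L := Nat.le_mul_of_pos_right _ hL
  set f := (2 * T + 1) * L - T
  have hf : f ∉ R := fun h => by
    have : f ≤ T := single_le_sum (f := id) (fun _ _ => Nat.zero_le _) h
    omega
  have hS : (insert f R).sum id = (2 * T + 1) * L := by
    rw [show (insert f R).sum id = f + T from sum_insert hf]
    omega
  refine ⟨f, hf, by omega, ?_⟩
  ext B
  simp only [kDivisors, mem_filter, mem_powersetCard]
  constructor
  · rintro ⟨⟨hBA, hBk⟩, hdvd⟩
    by_cases hfB : f ∈ B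
    · have hBR : B.erase f ⊆ R := fun a ha => by
        rcases mem_insert.mp (hBA (mem_of_mem_erase ha)) with rfl | h
        · exact absurd rfl (ne_of_mem_erase ha)
        · exact h
      obtain ⟨i, hi⟩ := sdiff_nonempty_of_card_lt_card (s := B.erase f) (t := R)
        (by rw [card_erase_of_mem hfB]; omega)
      have hlt : (B.erase f).sum id < T := sum_lt_sum_of_subset hBR (mem_sdiff.mp hi).1
        (mem_sdiff.mp hi).2 (hR i (mem_sdiff.mp hi).1) fun _ _ _ => Nat.zero_le _
      have hB : (B.erase f).sum id + f = B.sum id := sum_erase_add B id hfB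
      rw [hS] at hdvd
      exact absurd hdvd (Nat.not_dvd_of_lt_of_lt_mul_succ (k := 1) (by omega) (by omega))
    · exact ⟨(subset_insert_iff_of_notMem hfB).mp hBA, hBk⟩
  · rintro ⟨hBR, hBk⟩
    refine ⟨⟨hBR.trans (subset_insert _ _), hBk⟩, ?_⟩
    rw [hS]
    exact (dvd_prod_of_mem _ (mem_powersetCard.mpr ⟨hBR, hBk⟩)).mul_left _

end Counting

end Finset

/-- For `n ≥ 3`, every set of `2n` positive integers has at most `(1/2) * (2n).choose n`
divisors of size `n`, and this bound is attained. -/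
theorem stmt_11 (n : ℕ) (hn : 3 ≤ n) :
    (∀ A : Finset ℕ, A.card = 2 * n → (∀ a ∈ A, 0 < a) →
      2 * (A.powerset.filter (fun B => B.card = n ∧ B.sum id ∣ A.sum id)).card
        ≤ (2 * n).choose n) ∧
    (∃ A : Finset ℕ, A.card = 2 * n ∧ (∀ a ∈ A, 0 < a) ∧
      2 * (A.powerset.filter (fun B => B.card = n ∧ B.sum id ∣ A.sum id)).card
        = (2 * n).choose n) := by
  simp only [powerset_filter_eq_kDivisors]
  refine ⟨fun A hA hpos => ?_, ?_⟩
  · have hS : 0 < A.sum id := sum_pos hpos (card_pos.mp (by omega))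
    have := two_mul_card_kDivisors_add_card_le hA hS
    have := card_balancedSubsets_le hn hA
    omega
  · have hR : #(Icc 1 (2 * n - 1)) = 2 * n - 1 := by simp
    obtain ⟨f, hf, hf0, hdiv⟩ := exists_kDivisors_insert_eq_powersetCard
      (R := Icc 1 (2 * n - 1)) (k := n) (fun a ha => (mem_Icc.mp ha).1) (by omega)
      (by rw [hR]; omega)
    refine ⟨insert f (Icc 1 (2 * n - 1)), by rw [card_insert_of_notMem hf, hR]; omega,
      fun a ha => ?_, ?_⟩
    · rcases mem_insert.mp ha with rfl | ha
      exacts [hf0, (mem_Icc.mp ha).1]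
    · rw [hdiv, card_powersetCard, hR, Nat.two_mul_choose_two_mul_sub_one (by omega)]
end

section
/- Let n ≥ 5 and let A be a set of n positive integers. Then A has exactly 2^(n-1) divisors if and only if A is an anti-pencil. -/
/-- `B` is a divisor of `A`: a nonempty subset of `A` whose sum divides the sum of `A`. -/
def IsDivisor (A B : Finset ℕ) : Prop :=
  B ⊆ A ∧ B.Nonempty ∧ B.sum id ∣ A.sum id

/-- `A` is an anti-pencil: its divisors are precisely the nonempty subsets of `A \ {max A}`
together with `A` itself. -/
def IsAntiPencil (A : Finset ℕ) : Prop :=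
  ∃ M ∈ A, (∀ x ∈ A, x ≤ M) ∧
    ∀ B : Finset ℕ, IsDivisor A B ↔ ((B.Nonempty ∧ B ⊆ A.erase M) ∨ B = A)

/-!
Write `S` for the sum of `A`, `K` for the number of subsets of sum `S / 2`, and `L` for the
number of nonempty subsets of sum below `S / 2` that are not divisors. Pairing every subset with
its complement gives `2 d(A) + 2 L = 2 ^ n + K`, so `d(A) = 2 ^ (n - 1)` if and only if `K = 2 L`.
On the other hand `A` is an anti-pencil if and only if `K = L = 0`: then no subset sum lies
strictly between `S / 3` and `2 S / 3`, which forces `max A > S / 2`.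

It remains to see that `K < 2 L` as soon as `K > 0`. For any `a ∈ A` exactly half of the half
sets contain `a`, and if `a < S / 6` removing it from them gives `K / 2` sets counted by `L`, all
of sum `S / 2 - a`. Two such small elements give `K ≤ L`; a single one leaves four larger
elements, two pairs of which add a further set to `L`. If no element is small, every half set is
a pair, so `K ≤ 2`, while each of the `C(n, 2) ≥ 10` pairs is a half set or counted by `L`.
-/

namespace AntiPencil

open Finset

lemma two_mul_le_of_dvd_of_lt {t S : ℕ} (h : t ∣ S) (hlt : t < S) : 2 * t ≤ S := by
  obtain ⟨c, rfl⟩ := h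
  rcases c with _ | _ | c
  · omega
  · omega
  · nlinarith

lemma not_dvd_of_two_mul_lt_of_lt_three_mul {t S : ℕ} (h2 : 2 * t < S) (h3 : S < 3 * t) :
    ¬ t ∣ S :=
  Nat.not_dvd_of_lt_of_lt_mul_succ (k := 2) (by omega) (by omega)

lemma sum_powerset_sdiff {α M : Type*} [DecidableEq α] [AddCommMonoid M] (A : Finset α)
    (f : Finset α → M) : ∑ B ∈ A.powerset, f (A \ B) = ∑ B ∈ A.powerset, f B :=
  sum_nbij' (A \ ·) (A \ ·) (by simp) (by simp)
    (fun _ hB => Finset.sdiff_sdiff_eq_self (mem_powerset.1 hB))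
    (fun _ hB => Finset.sdiff_sdiff_eq_self (mem_powerset.1 hB)) (fun _ _ => rfl)

/-- `s` and `t` are the sums of a subset and of its complement. -/
lemma ite_divisor_add_ite_low_eq {s t S : ℕ} (hst : s + t = S) (hS : 0 < S) :
    ((if 0 < s ∧ s ∣ S then 1 else 0) + (if 0 < t ∧ t ∣ S then 1 else 0) +
      (if 0 < s ∧ 2 * s < S ∧ ¬ s ∣ S then 1 else 0) +
      (if 0 < t ∧ 2 * t < S ∧ ¬ t ∣ S then 1 else 0) : ℕ) =
      1 + if 2 * s = S then 1 else 0 := by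
  have hs : s ∣ S → 0 < t → 2 * s ≤ S := fun h _ => two_mul_le_of_dvd_of_lt h (by omega)
  have ht : t ∣ S → 0 < s → 2 * t ≤ S := fun h _ => two_mul_le_of_dvd_of_lt h (by omega)
  have hhalf : 2 * s = S → s ∣ S ∧ t ∣ S := fun h => ⟨⟨2, by omega⟩, ⟨2, by omega⟩⟩
  have hs0 : s = 0 → t ∣ S := fun h => ⟨1, by omega⟩
  have ht0 : t = 0 → s ∣ S := fun h => ⟨1, by omega⟩
  by_cases hsd : s ∣ S <;> by_cases htd : t ∣ S <;>
    simp only [hsd, htd, and_true, and_false, imp_false, not_true_eq_false, true_imp_iff,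
      not_false_eq_true, if_false] at hs ht hhalf hs0 ht0 ⊢ <;>
    split_ifs <;> omega

variable {A B : Finset ℕ}

lemma le_sum_of_mem {x : ℕ} (hx : x ∈ B) : x ≤ B.sum id :=
  single_le_sum (f := id) (fun _ _ => Nat.zero_le _) hx

lemma sum_erase_add_self {x : ℕ} (hx : x ∈ B) : (B.erase x).sum id + x = B.sum id :=
  sum_erase_add B id hx

lemma add_le_sum_of_mem {x y : ℕ} (hx : x ∈ B) (hy : y ∈ B) (hxy : x ≠ y) :
    x + y ≤ B.sum id :=
  sum_pair (f := id) hxy ▸ sum_le_sum_of_subset (by simp [insert_subset_iff, hx, hy])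

def divisorSets (A : Finset ℕ) : Finset (Finset ℕ) :=
  A.powerset.filter (fun B => B.Nonempty ∧ B.sum id ∣ A.sum id)

def halfSets (A : Finset ℕ) : Finset (Finset ℕ) :=
  A.powerset.filter (fun B => 2 * B.sum id = A.sum id)

def lowNondivisors (A : Finset ℕ) : Finset (Finset ℕ) :=
  A.powerset.filter (fun B => 0 < B.sum id ∧ 2 * B.sum id < A.sum id ∧ ¬ B.sum id ∣ A.sum id)

lemma mem_halfSets : B ∈ halfSets A ↔ B ⊆ A ∧ 2 * B.sum id = A.sum id := by
  simp [halfSets]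

lemma mem_lowNondivisors : B ∈ lowNondivisors A ↔
    B ⊆ A ∧ 0 < B.sum id ∧ 2 * B.sum id < A.sum id ∧ ¬ B.sum id ∣ A.sum id := by
  simp [lowNondivisors]

lemma sum_pos_iff_nonempty (hpos : ∀ a ∈ A, 0 < a) (hB : B ⊆ A) :
    0 < B.sum id ↔ B.Nonempty :=
  ⟨fun h => nonempty_of_sum_ne_zero h.ne', sum_pos fun i hi => hpos i (hB hi)⟩

theorem two_mul_card_divisorSets_add_two_mul_card_lowNondivisors (hpos : ∀ a ∈ A, 0 < a)
    (hA : A.Nonempty) :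
    2 * #(divisorSets A) + 2 * #(lowNondivisors A) = 2 ^ #A + #(halfSets A) := by
  have hS : 0 < A.sum id := (sum_pos_iff_nonempty hpos Subset.rfl).2 hA
  have key : ∀ B ∈ A.powerset,
      ((if B.Nonempty ∧ B.sum id ∣ A.sum id then 1 else 0) +
        (if (A \ B).Nonempty ∧ (A \ B).sum id ∣ A.sum id then 1 else 0) +
        (if 0 < B.sum id ∧ 2 * B.sum id < A.sum id ∧ ¬ B.sum id ∣ A.sum id then 1 else 0) +
        (if 0 < (A \ B).sum id ∧ 2 * (A \ B).sum id < A.sum id ∧ ¬ (A \ B).sum id ∣ A.sum id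
          then 1 else 0) : ℕ) = 1 + if 2 * B.sum id = A.sum id then 1 else 0 := by
    intro B hB
    have hBA := mem_powerset.1 hB
    simp only [← sum_pos_iff_nonempty hpos hBA, ← sum_pos_iff_nonempty hpos sdiff_subset]
    exact ite_divisor_add_ite_low_eq (by rw [add_comm, sum_sdiff hBA]) hS
  have := sum_congr rfl key
  simp only [sum_add_distrib, sum_powerset_sdiff A
    (fun C => if C.Nonempty ∧ C.sum id ∣ A.sum id then 1 else 0),
    sum_powerset_sdiff A (fun C => if 0 < C.sum id ∧ 2 * C.sum id < A.sum id ∧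
      ¬ C.sum id ∣ A.sum id then 1 else 0),
    ← card_filter, sum_const, card_powerset, smul_eq_mul, mul_one] at this
  rw [divisorSets, lowNondivisors, halfSets]
  omega

lemma sum_le_two_mul_of_divisor_iff (hpos : ∀ a ∈ A, 0 < a) {M : ℕ} (hMA : M ∈ A)
    (hdiv : ∀ B, IsDivisor A B ↔ (B.Nonempty ∧ B ⊆ A.erase M) ∨ B = A) :
    A.sum id ≤ 2 * M := by
  have hsum := sum_erase_add_self hMA
  rcases (A.erase M).eq_empty_or_nonempty with hE | hE
  · rw [hE, sum_empty] at hsum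
    omega
  · have hdvd := ((hdiv _).2 (Or.inl ⟨hE, Subset.rfl⟩)).2.2
    have := two_mul_le_of_dvd_of_lt hdvd (by have := hpos M hMA; omega)
    omega

lemma halfSets_eq_empty_of_divisor_iff (hS : 0 < A.sum id) {M : ℕ} (hMA : M ∈ A)
    (hdiv : ∀ B, IsDivisor A B ↔ (B.Nonempty ∧ B ⊆ A.erase M) ∨ B = A) :
    halfSets A = ∅ := by
  have hnot_mem : ∀ C ∈ halfSets A, M ∉ C := by
    intro C hC hMC
    obtain ⟨hCA, hC2⟩ := mem_halfSets.1 hC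
    have hCne : C.Nonempty := nonempty_iff_ne_empty.2 fun h => by rw [h, sum_empty] at hC2; omega
    rcases (hdiv C).1 ⟨hCA, hCne, ⟨2, by omega⟩⟩ with ⟨-, hCM⟩ | rfl
    · exact (mem_erase.1 (hCM hMC)).1 rfl
    · omega
  refine eq_empty_of_forall_notMem fun C hC => hnot_mem (A \ C) ?_ ?_
  · obtain ⟨hCA, hC2⟩ := mem_halfSets.1 hC
    have : (A \ C).sum id + C.sum id = A.sum id := sum_sdiff hCA
    exact mem_halfSets.2 ⟨sdiff_subset, by omega⟩
  · exact mem_sdiff.2 ⟨hMA, hnot_mem C hC⟩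

lemma lowNondivisors_eq_empty_of_divisor_iff (hpos : ∀ a ∈ A, 0 < a) {M : ℕ} (hMA : M ∈ A)
    (hdiv : ∀ B, IsDivisor A B ↔ (B.Nonempty ∧ B ⊆ A.erase M) ∨ B = A) :
    lowNondivisors A = ∅ := by
  have hM := sum_le_two_mul_of_divisor_iff hpos hMA hdiv
  refine eq_empty_of_forall_notMem fun B hB => ?_
  obtain ⟨hBA, hB0, hB2, hBd⟩ := mem_lowNondivisors.1 hB
  have hMB : M ∉ B := fun hMB => by
    have := le_sum_of_mem hMB
    omega
  exact hBd ((hdiv B).2 (Or.inl ⟨nonempty_of_sum_ne_zero hB0.ne',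
    subset_erase.2 ⟨hBA, hMB⟩⟩)).2.2

lemma isAntiPencil_of_lowNondivisors_eq_empty (hpos : ∀ a ∈ A, 0 < a)
    (hL : lowNondivisors A = ∅) {M : ℕ} (hMA : M ∈ A) (hM : A.sum id < 2 * M) :
    IsAntiPencil A := by
  have hsum := sum_erase_add_self hMA
  refine ⟨M, hMA, fun x hx => ?_, fun B => ⟨?_, ?_⟩⟩
  · rcases eq_or_ne x M with rfl | hxM
    · exact le_rfl
    · have := le_sum_of_mem (mem_erase.2 ⟨hxM, hx⟩)
      omega
  · rintro ⟨hBA, hBne, hBd⟩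
    refine or_iff_not_imp_right.2 fun hBA' => ⟨hBne, subset_erase.2 ⟨hBA, fun hMB => ?_⟩⟩
    obtain ⟨x, hxA, hxB⟩ := not_subset.1 fun hAB => hBA' (hBA.antisymm hAB)
    have hlt : B.sum id < A.sum id :=
      sum_lt_sum_of_subset hBA hxA hxB (hpos x hxA) fun _ _ _ => Nat.zero_le _
    have := two_mul_le_of_dvd_of_lt hBd hlt
    have := le_sum_of_mem hMB
    omega
  · rintro (⟨hBne, hBM⟩ | rfl)
    · have hBA := hBM.trans (erase_subset M A)
      have hB0 := (sum_pos_iff_nonempty hpos hBA).2 hBne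
      have : B.sum id ≤ (A.erase M).sum id := sum_le_sum_of_subset hBM
      refine ⟨hBA, hBne, not_not.1 fun hBd => ?_⟩
      have hB : B ∈ lowNondivisors A := mem_lowNondivisors.2 ⟨hBA, hB0, by omega, hBd⟩
      simp [hL] at hB
    · exact ⟨Subset.rfl, ⟨M, hMA⟩, dvd_rfl⟩

lemma three_mul_sum_le_or_two_mul_le_three_mul_sum (hK : halfSets A = ∅)
    (hL : lowNondivisors A = ∅) (hBA : B ⊆ A) :
    3 * B.sum id ≤ A.sum id ∨ 2 * A.sum id ≤ 3 * B.sum id := by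
  by_contra! h
  have hsum : (A \ B).sum id + B.sum id = A.sum id := sum_sdiff hBA
  rcases lt_trichotomy (2 * B.sum id) (A.sum id) with hlt | heq | hgt
  · have hB : B ∈ lowNondivisors A := mem_lowNondivisors.2
      ⟨hBA, by omega, hlt, not_dvd_of_two_mul_lt_of_lt_three_mul hlt (by omega)⟩
    simp [hL] at hB
  · have hB : B ∈ halfSets A := mem_halfSets.2 ⟨hBA, heq⟩
    simp [hK] at hB
  · have hB : A \ B ∈ lowNondivisors A := mem_lowNondivisors.2 ⟨sdiff_subset, by omega,
      by omega, not_dvd_of_two_mul_lt_of_lt_three_mul (by omega) (by omega)⟩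
    simp [hL] at hB

/-- A subset of least sum among those with sum above `S / 3` must, by the gap
`three_mul_sum_le_or_two_mul_le_three_mul_sum`, be a single element of size at least `2S / 3`. -/
lemma exists_sum_lt_two_mul (hpos : ∀ a ∈ A, 0 < a) (hA : A.Nonempty) (hK : halfSets A = ∅)
    (hL : lowNondivisors A = ∅) : ∃ M ∈ A, A.sum id < 2 * M := by
  have hS : 0 < A.sum id := (sum_pos_iff_nonempty hpos Subset.rfl).2 hA
  obtain ⟨B, hB, hmin⟩ := exists_min_image (A.powerset.filter fun B => A.sum id < 3 * B.sum id)
    (fun B => B.sum id) ⟨A, mem_filter.2 ⟨mem_powerset_self A, by omega⟩⟩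
  obtain ⟨hBA, hB3⟩ := mem_filter.1 hB
  rw [mem_powerset] at hBA
  have hgap := three_mul_sum_le_or_two_mul_le_three_mul_sum hK hL hBA
  have herase : ∀ b ∈ B, 3 * ((B.erase b).sum id) ≤ A.sum id := fun b hb => by
    by_contra! h
    have := hmin _ (mem_filter.2 ⟨mem_powerset.2 ((erase_subset b B).trans hBA), h⟩)
    have := sum_erase_add_self hb
    have := hpos b (hBA hb)
    omega
  obtain ⟨b, hb⟩ := (sum_pos_iff_nonempty hpos hBA).1 (by omega)
  have hBb : B.erase b = ∅ := eq_empty_of_forall_notMem fun c hc => by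
    obtain ⟨hcb, hcB⟩ := mem_erase.1 hc
    have := herase b hb
    have := herase c hcB
    have := le_sum_of_mem hc
    have := le_sum_of_mem (mem_erase.2 ⟨hcb.symm, hb⟩)
    have := sum_erase_add_self hb
    have := sum_erase_add_self hcB
    omega
  have := sum_erase_add_self hb
  rw [hBb, sum_empty, zero_add] at this
  exact ⟨b, hBA hb, by omega⟩

theorem isAntiPencil_iff (hpos : ∀ a ∈ A, 0 < a) (hA : A.Nonempty) :
    IsAntiPencil A ↔ halfSets A = ∅ ∧ lowNondivisors A = ∅ := by
  constructor
  · rintro ⟨M, hMA, -, hdiv⟩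
    have hS := (sum_pos_iff_nonempty hpos Subset.rfl).2 hA
    exact ⟨halfSets_eq_empty_of_divisor_iff hS hMA hdiv,
      lowNondivisors_eq_empty_of_divisor_iff hpos hMA hdiv⟩
  · rintro ⟨hK, hL⟩
    obtain ⟨M, hMA, hM⟩ := exists_sum_lt_two_mul hpos hA hK hL
    exact isAntiPencil_of_lowNondivisors_eq_empty hpos hL hMA hM

lemma card_halfSets_eq_two_mul_card_filter_mem {a : ℕ} (ha : a ∈ A) :
    #(halfSets A) = 2 * #((halfSets A).filter (a ∈ ·)) := by
  have hcompl : #((halfSets A).filter (a ∉ ·)) = #((halfSets A).filter (a ∈ ·)) := by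
    refine card_nbij' (A \ ·) (A \ ·) ?_ ?_ ?_ ?_ <;> intro C hC <;>
      simp only [mem_coe, mem_filter, mem_halfSets] at hC ⊢
    · have : (A \ C).sum id + C.sum id = A.sum id := sum_sdiff hC.1.1
      exact ⟨⟨sdiff_subset, by omega⟩, mem_sdiff.2 ⟨ha, hC.2⟩⟩
    · have : (A \ C).sum id + C.sum id = A.sum id := sum_sdiff hC.1.1
      exact ⟨⟨sdiff_subset, by omega⟩, fun h => (mem_sdiff.1 h).2 hC.2⟩
    · exact Finset.sdiff_sdiff_eq_self hC.1.1
    · exact Finset.sdiff_sdiff_eq_self hC.1.1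
  have := card_filter_add_card_filter_not (s := halfSets A) (a ∈ ·)
  omega

/-- Removing a small element `a` from a half set leaves a set of sum `S / 2 - a`, which lies
strictly between `S / 3` and `S / 2`. -/
lemma card_halfSets_le_two_mul_card_filter_lowNondivisors {a : ℕ} (ha : a ∈ A) (ha0 : 0 < a)
    (h6a : 6 * a < A.sum id) :
    #(halfSets A) ≤
      2 * #((lowNondivisors A).filter fun B => 2 * B.sum id + 2 * a = A.sum id) := by
  rw [card_halfSets_eq_two_mul_card_filter_mem ha]
  refine Nat.mul_le_mul_left 2 (card_le_card_of_injOn (·.erase a) (fun C hC => ?_)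
    fun C hC D hD => erase_injOn' a (mem_filter.1 hC).2 (mem_filter.1 hD).2)
  obtain ⟨hC, haC⟩ := mem_filter.1 hC
  obtain ⟨hCA, hC2⟩ := mem_halfSets.1 hC
  have := sum_erase_add_self haC
  dsimp only
  refine mem_filter.2 ⟨mem_lowNondivisors.2 ⟨(erase_subset a C).trans hCA, by omega, by omega,
    not_dvd_of_two_mul_lt_of_lt_three_mul (by omega) (by omega)⟩, by omega⟩

lemma card_halfSets_le_card_lowNondivisors {a b : ℕ} (ha : a ∈ A) (hb : b ∈ A) (hab : a ≠ b)
    (ha0 : 0 < a) (hb0 : 0 < b) (h6a : 6 * a < A.sum id) (h6b : 6 * b < A.sum id) :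
    #(halfSets A) ≤ #(lowNondivisors A) := by
  have hLa := card_halfSets_le_two_mul_card_filter_lowNondivisors ha ha0 h6a
  have hLb := card_halfSets_le_two_mul_card_filter_lowNondivisors hb hb0 h6b
  have hsub : (lowNondivisors A).filter (fun B => 2 * B.sum id + 2 * b = A.sum id) ⊆
      (lowNondivisors A).filter (fun B => ¬ 2 * B.sum id + 2 * a = A.sum id) :=
    monotone_filter_right _ fun B hB => by omega
  have := card_le_card hsub
  have := card_filter_add_card_filter_not (s := lowNondivisors A)
    (fun B => 2 * B.sum id + 2 * a = A.sum id)
  omega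

lemma card_mul_le_mul_sum {k m : ℕ} (h : ∀ x ∈ B, m ≤ k * x) : #B * m ≤ k * B.sum id := by
  simpa [mul_sum] using card_nsmul_le_sum B (k * ·) m h

lemma exists_four_add_le_sum (h : 3 < #B) : ∃ p ∈ B, ∃ q ∈ B, ∃ r ∈ B, ∃ s ∈ B,
    p ≠ q ∧ p ≠ r ∧ p ≠ s ∧ q ≠ r ∧ q ≠ s ∧ r ≠ s ∧ p + q + r + s ≤ B.sum id := by
  obtain ⟨p, hp⟩ := card_pos.1 (by omega : 0 < #B)
  obtain ⟨q, r, s, hq, hr, hs, hqr, hqs, hrs⟩ :=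
    two_lt_card_iff.1 (by rw [card_erase_of_mem hp]; omega : 2 < #(B.erase p))
  have hqr' := add_le_sum_of_mem (mem_erase.2 ⟨hqs, hq⟩) (mem_erase.2 ⟨hrs, hr⟩) hqr
  have := sum_erase_add_self hs
  have := sum_erase_add_self hp
  exact ⟨p, hp, q, mem_of_mem_erase hq, r, mem_of_mem_erase hr, s, mem_of_mem_erase hs,
    (ne_of_mem_erase hq).symm, (ne_of_mem_erase hr).symm, (ne_of_mem_erase hs).symm,
    hqr, hqs, hrs, by omega⟩

/-- When exactly one element `a` is below `S / 6`, among four other elements `p, q, r, s` one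
of `{p, q}, {r, s}` and one of `{p, r}, {q, s}` has sum below `S / 2`; these two pairs lie
in `lowNondivisors A` and have different sums, so not both have sum `S / 2 - a`. -/
lemma card_halfSets_lt_two_mul_of_forall_ne_le_six_mul (h5 : 5 ≤ #A) {a : ℕ} (ha : a ∈ A)
    (ha0 : 0 < a) (h6a : 6 * a < A.sum id) (hbig : ∀ x ∈ A, x ≠ a → A.sum id ≤ 6 * x) :
    #(halfSets A) < 2 * #(lowNondivisors A) := by
  have hLa := card_halfSets_le_two_mul_card_filter_lowNondivisors ha ha0 h6a
  suffices #((lowNondivisors A).filter fun B => 2 * B.sum id + 2 * a = A.sum id) <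
      #(lowNondivisors A) by omega
  refine card_lt_card (filter_ssubset.2 ?_)
  by_contra! h
  have hpair : ∀ x ∈ A.erase a, ∀ y ∈ A.erase a, x ≠ y → 2 * (x + y) < A.sum id →
      2 * (x + y) + 2 * a = A.sum id := by
    intro x hx y hy hxy hlt
    have := hbig x (mem_of_mem_erase hx) (ne_of_mem_erase hx)
    have := hbig y (mem_of_mem_erase hy) (ne_of_mem_erase hy)
    have hsum : ({x, y} : Finset ℕ).sum id = x + y := sum_pair hxy
    have := h {x, y} (mem_lowNondivisors.2 ⟨by simp [insert_subset_iff, mem_of_mem_erase hx,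
      mem_of_mem_erase hy], by omega, by omega,
      not_dvd_of_two_mul_lt_of_lt_three_mul (by omega) (by omega)⟩)
    omega
  obtain ⟨p, hp, q, hq, r, hr, s, hs, hpq, hpr, hps, hqr, hqs, hrs, hsum⟩ :=
    exists_four_add_le_sum (B := A.erase a) (by rw [card_erase_of_mem ha]; omega)
  have := sum_erase_add_self ha
  have := hpair p hp q hq hpq
  have := hpair r hr s hs hrs
  have := hpair p hp r hr hpr
  have := hpair q hq s hs hqs
  omega

lemma card_filter_mem_halfSets_le_one (hbig : ∀ x ∈ A, A.sum id ≤ 6 * x) {a : ℕ} (ha : a ∈ A)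
    (h2a : 2 * a < A.sum id) : #((halfSets A).filter (a ∈ ·)) ≤ 1 := by
  have hpair : ∀ C ∈ (halfSets A).filter (a ∈ ·), ∃ b, C = insert a {b} ∧
      2 * (a + b) = A.sum id := by
    intro C hC
    obtain ⟨hC, haC⟩ := mem_filter.1 hC
    obtain ⟨hCA, hC2⟩ := mem_halfSets.1 hC
    have hsum := sum_erase_add_self haC
    have hne : (C.erase a).Nonempty := nonempty_iff_ne_empty.2 fun h => by
      rw [h, sum_empty] at hsum
      omega
    have hle : #(C.erase a) ≤ 1 := card_le_one.2 fun x hx y hy => by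
      by_contra hxy
      have := add_le_sum_of_mem hx hy hxy
      have := hbig x (hCA (mem_of_mem_erase hx))
      have := hbig y (hCA (mem_of_mem_erase hy))
      have := hbig a ha
      omega
    obtain ⟨b, hb⟩ := card_eq_one.1 (le_antisymm hle hne.card_pos)
    rw [hb, sum_singleton, id] at hsum
    exact ⟨b, by rw [← hb, insert_erase haC], by omega⟩
  refine card_le_one.2 fun C hC D hD => ?_
  obtain ⟨b, rfl, hb⟩ := hpair C hC
  obtain ⟨c, rfl, hc⟩ := hpair D hD
  rw [show b = c by omega]

lemma powersetCard_two_subset_halfSets_union_lowNondivisors (h5 : 5 ≤ #A)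
    (hbig : ∀ x ∈ A, A.sum id ≤ 6 * x) :
    powersetCard 2 A ⊆ halfSets A ∪ lowNondivisors A := by
  intro P hP
  obtain ⟨hPA, hP2⟩ := mem_powersetCard.1 hP
  obtain ⟨x, y, hxy, rfl⟩ := card_eq_two.1 hP2
  have hsum : ({x, y} : Finset ℕ).sum id = x + y := sum_pair hxy
  have := hbig x (hPA (by simp))
  have := hbig y (hPA (by simp))
  have hrest := card_mul_le_mul_sum (B := A \ {x, y}) fun z hz => hbig z (mem_sdiff.1 hz).1
  have : 3 * A.sum id ≤ #(A \ {x, y}) * A.sum id :=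
    Nat.mul_le_mul_right _ (by rw [card_sdiff_of_subset hPA, hP2]; omega)
  have : (A \ {x, y}).sum id + ({x, y} : Finset ℕ).sum id = A.sum id := sum_sdiff hPA
  rcases (show 2 * (x + y) ≤ A.sum id by omega).eq_or_lt with heq | hlt
  · exact mem_union_left _ (mem_halfSets.2 ⟨hPA, by omega⟩)
  · exact mem_union_right _ (mem_lowNondivisors.2 ⟨hPA, by omega, by omega,
      hsum ▸ not_dvd_of_two_mul_lt_of_lt_three_mul hlt (by omega)⟩)

lemma card_halfSets_lt_two_mul_of_forall_le_six_mul (h5 : 5 ≤ #A) (hS : 0 < A.sum id)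
    (hbig : ∀ x ∈ A, A.sum id ≤ 6 * x) : #(halfSets A) < 2 * #(lowNondivisors A) := by
  obtain ⟨a, ha⟩ := card_pos.1 (by omega : 0 < #A)
  have h2a : 2 * a < A.sum id := by
    have := card_mul_le_mul_sum (B := A.erase a) fun x hx => hbig x (mem_of_mem_erase hx)
    rw [card_erase_of_mem ha] at this
    have : 4 * A.sum id ≤ (#A - 1) * A.sum id := Nat.mul_le_mul_right _ (by omega)
    have := sum_erase_add_self ha
    omega
  have hK := card_halfSets_eq_two_mul_card_filter_mem ha
  have := card_filter_mem_halfSets_le_one hbig ha h2a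
  have hpairs := (card_le_card (powersetCard_two_subset_halfSets_union_lowNondivisors h5 hbig)).trans
    (card_union_le _ _)
  rw [card_powersetCard] at hpairs
  have : 10 ≤ (#A).choose 2 := Nat.choose_le_choose 2 h5
  omega

theorem card_halfSets_lt_two_mul_card_lowNondivisors (h5 : 5 ≤ #A) (hpos : ∀ a ∈ A, 0 < a)
    (hK : (halfSets A).Nonempty) : #(halfSets A) < 2 * #(lowNondivisors A) := by
  by_cases hsmall : ∃ a ∈ A, 6 * a < A.sum id
  · obtain ⟨a, ha, h6a⟩ := hsmall
    by_cases hsmall' : ∃ b ∈ A, b ≠ a ∧ 6 * b < A.sum id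
    · obtain ⟨b, hb, hba, h6b⟩ := hsmall'
      have := card_halfSets_le_card_lowNondivisors ha hb hba.symm (hpos a ha) (hpos b hb) h6a h6b
      have := hK.card_pos
      omega
    · push Not at hsmall'
      exact card_halfSets_lt_two_mul_of_forall_ne_le_six_mul h5 ha (hpos a ha) h6a hsmall'
  · push Not at hsmall
    exact card_halfSets_lt_two_mul_of_forall_le_six_mul h5
      ((sum_pos_iff_nonempty hpos Subset.rfl).2 (card_pos.1 (by omega))) hsmall

end AntiPencil

open Finset AntiPencil

/-- For `n ≥ 5`, a set of `n` positive integers has exactly `2 ^ (n - 1)` divisors if and only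
if it is an anti-pencil. -/
theorem stmt_14 (n : ℕ) (hn : 5 ≤ n) (A : Finset ℕ) (hcard : A.card = n)
    (hpos : ∀ a ∈ A, 0 < a) :
    (A.powerset.filter (fun B => B.Nonempty ∧ B.sum id ∣ A.sum id)).card = 2 ^ (n - 1) ↔
      IsAntiPencil A := by
  subst hcard
  have hA : A.Nonempty := card_pos.1 (by omega)
  have hcount := two_mul_card_divisorSets_add_two_mul_card_lowNondivisors hpos hA
  have hpow : 2 ^ #A = 2 * 2 ^ (#A - 1) := by rw [← pow_succ', Nat.sub_add_cancel (by omega)]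
  change #(divisorSets A) = _ ↔ _
  rw [isAntiPencil_iff hpos hA]
  constructor
  · intro hD
    have hK : halfSets A = ∅ := not_nonempty_iff_eq_empty.1 fun hK => by
      have := card_halfSets_lt_two_mul_card_lowNondivisors hn hpos hK
      omega
    rw [hK, card_empty] at hcount
    exact ⟨hK, card_eq_zero.1 (by omega)⟩
  · rintro ⟨hK, hL⟩
    rw [hK, hL, card_empty] at hcount
    omega
end

section
/- Let n ≥ 1 and let A be a set of n real numbers whose elements sum to zero. Then the number of subsets of A whose elements have nonnegative sum (where the empty set is counted, with sum 0) is at least 2^(n-1) + 1. -/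
/-!
Taking complements in `A` exchanges the subsets with nonnegative sum and those with nonpositive
sum, so both families have the same size `N`. Every subset lies in one of them, and the subsets
lying in both are exactly those with sum zero, among which are `∅` and `A`. Hence
`2 N = 2 ^ n + #{zero-sum subsets} ≥ 2 ^ n + 2`.
-/

namespace Finset

variable {ι M : Type*} [DecidableEq ι] {s B : Finset ι} {f : ι → M}

theorem sum_sdiff_eq_neg_of_sum_eq_zero [AddCommGroup M] (hs : ∑ i ∈ s, f i = 0)
    (hB : B ⊆ s) : ∑ i ∈ s \ B, f i = -∑ i ∈ B, f i := by
  rw [eq_neg_iff_add_eq_zero, sum_sdiff hB, hs]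

theorem two_le_card_sum_eq_zero [AddCommMonoid M] [DecidableEq M] (hs : ∑ i ∈ s, f i = 0)
    (hne : s.Nonempty) :
    2 ≤ #{B ∈ s.powerset | ∑ i ∈ B, f i = 0} := by
  have hsub : {∅, s} ⊆ {B ∈ s.powerset | ∑ i ∈ B, f i = 0} := by
    simp [insert_subset_iff, hs]
  calc 2 = #{∅, s} := (card_pair hne.ne_empty.symm).symm
    _ ≤ _ := card_le_card hsub

theorem card_powerset_add_card_sum_eq_zero [AddCommMonoid M] [LinearOrder M] :
    #s.powerset + #{B ∈ s.powerset | ∑ i ∈ B, f i = 0} =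
      #{B ∈ s.powerset | 0 ≤ ∑ i ∈ B, f i} + #{B ∈ s.powerset | ∑ i ∈ B, f i ≤ 0} := by
  rw [← card_union_add_card_inter _ {B ∈ s.powerset | ∑ i ∈ B, f i ≤ 0}, ← filter_or, ← filter_and]
  congr 2
  · exact (filter_true_of_mem fun B _ => le_total _ _).symm
  · exact filter_congr fun B _ => le_antisymm_iff.trans and_comm

variable [AddCommGroup M] [LinearOrder M] [IsOrderedAddMonoid M]

theorem card_sum_nonneg_eq_card_sum_nonpos (hs : ∑ i ∈ s, f i = 0) :
    #{B ∈ s.powerset | 0 ≤ ∑ i ∈ B, f i} = #{B ∈ s.powerset | ∑ i ∈ B, f i ≤ 0} := by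
  refine card_nbij' (s \ ·) (s \ ·) ?_ ?_ ?_ ?_ <;>
    simp only [coe_filter, mem_powerset, Set.MapsTo, Set.LeftInvOn, Set.mem_ofPred_eq]
  · rintro B ⟨hB, h⟩
    exact ⟨sdiff_subset, by rwa [sum_sdiff_eq_neg_of_sum_eq_zero hs hB, neg_nonpos]⟩
  · rintro B ⟨hB, h⟩
    exact ⟨sdiff_subset, by rwa [sum_sdiff_eq_neg_of_sum_eq_zero hs hB, neg_nonneg]⟩
  · exact fun B ⟨hB, _⟩ => sdiff_sdiff_eq_self hB
  · exact fun B ⟨hB, _⟩ => sdiff_sdiff_eq_self hB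

end Finset

open Finset

open scoped Classical in
/-- For `n ≥ 1`, any set of `n` real numbers summing to zero has at least `2 ^ (n - 1) + 1`
subsets with nonnegative sum (the empty set counts, with sum `0`). -/
theorem stmt_17 (n : ℕ) (hn : 1 ≤ n) (A : Finset ℝ) (hcard : A.card = n)
    (hsum : A.sum id = 0) :
    2 ^ (n - 1) + 1 ≤ (A.powerset.filter (fun B => 0 ≤ B.sum id)).card := by
  have hne : A.Nonempty := card_pos.mp (hcard ▸ hn)
  have hcount : 2 ^ n + #{B ∈ A.powerset | B.sum id = 0} =
      #{B ∈ A.powerset | 0 ≤ B.sum id} + #{B ∈ A.powerset | B.sum id ≤ 0} := by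
    rw [← hcard, ← card_powerset]
    exact card_powerset_add_card_sum_eq_zero
  have hsymm : #{B ∈ A.powerset | 0 ≤ B.sum id} = #{B ∈ A.powerset | B.sum id ≤ 0} :=
    card_sum_nonneg_eq_card_sum_nonpos hsum
  have hzero : 2 ≤ #{B ∈ A.powerset | B.sum id = 0} := two_le_card_sum_eq_zero hsum hne
  have hpow : 2 ^ n = 2 * 2 ^ (n - 1) := by
    rw [← pow_succ', Nat.sub_add_cancel hn]
  omega
end

section
/- For every n ≥ 2, the set A = {1, 2, ..., n-1} ∪ {-n(n-1)/2} is a set of n real numbers with total sum 0 that has exactly 2^(n-1) + 1 subsets whose elements have nonnegative sum (counting the empty set, whose sum is 0). -/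
/-!
Write `A = insert m S` with `S = {1, …, n - 1}` and `m = -∑ S`. Every subset of `S` has nonnegative
sum, which gives `2 ^ (n - 1)` subsets. A subset containing `m` has the form `insert m C` with
`C ⊆ S`, and its sum `∑ C - ∑ S` is nonnegative only for `C = S`, since the elements of `S` are
positive; this gives the one extra subset `A`.
-/

open Finset

section OrderedGroup

variable {α : Type*} [AddCommGroup α] [LinearOrder α] [IsOrderedAddMonoid α] {S C : Finset α}

theorem Finset.eq_of_subset_of_sum_le (hS : ∀ x ∈ S, 0 < x) (hC : C ⊆ S)
    (h : ∑ x ∈ S, x ≤ ∑ x ∈ C, x) : C = S := by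
  by_contra hne
  obtain ⟨x, hxS, hxC⟩ := exists_of_ssubset (ssubset_iff_subset_ne.mpr ⟨hC, hne⟩)
  have hlt : ∑ y ∈ C, y < ∑ y ∈ S, y :=
    sum_lt_sum_of_subset hC hxS hxC (hS x hxS) fun y hy _ => (hS y hy).le
  exact h.not_gt hlt

theorem Finset.notMem_of_add_sum_eq_zero {m : α} (hS : ∀ x ∈ S, 0 < x)
    (hm : m + ∑ x ∈ S, x = 0) : m ∉ S := fun h =>
  (hS m h).not_ge (eq_neg_of_add_eq_zero_left hm ▸ neg_nonpos.mpr (sum_pos hS ⟨m, h⟩).le)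

theorem Finset.filter_sum_nonneg_powerset_insert_neg_sum {m : α} (hS : ∀ x ∈ S, 0 < x)
    (hm : m + ∑ x ∈ S, x = 0) :
    (insert m S).powerset.filter (fun B => 0 ≤ ∑ x ∈ B, x) = insert (insert m S) S.powerset := by
  have hmS : m ∉ S := notMem_of_add_sum_eq_zero hS hm
  ext B
  simp only [mem_filter, mem_powerset, mem_insert]
  by_cases hmB : m ∈ B
  · obtain ⟨C, hmC, rfl⟩ : ∃ C, m ∉ C ∧ insert m C = B :=
      ⟨B.erase m, notMem_erase m B, insert_erase hmB⟩
    have hnotS : ¬ insert m C ⊆ S := fun h => hmS (h (mem_insert_self m C))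
    rw [insert_subset_insert_iff hmC, sum_insert hmC, ← hm, add_le_add_iff_left, or_iff_left hnotS]
    constructor
    · rintro ⟨hCS, hle⟩
      rw [eq_of_subset_of_sum_le hS hCS hle]
    · intro h
      have hCS : C = S := by rw [← erase_insert hmC, h, erase_insert hmS]
      exact ⟨hCS.subset, hCS ▸ le_rfl⟩
  · have hne : B ≠ insert m S := fun h => hmB (h ▸ mem_insert_self m S)
    rw [subset_insert_iff_of_notMem hmB, or_iff_right hne, and_iff_left_iff_imp]
    exact fun hBS => sum_nonneg fun x hx => (hS x (hBS hx)).le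

theorem Finset.card_filter_sum_nonneg_powerset_insert_neg_sum {m : α} (hS : ∀ x ∈ S, 0 < x)
    (hm : m + ∑ x ∈ S, x = 0) :
    #((insert m S).powerset.filter (fun B => 0 ≤ ∑ x ∈ B, x)) = 2 ^ #S + 1 := by
  have hA : insert m S ∉ S.powerset := fun h =>
    notMem_of_add_sum_eq_zero hS hm (mem_powerset.mp h (mem_insert_self m S))
  rw [filter_sum_nonneg_powerset_insert_neg_sum hS hm, card_insert_of_notMem hA, card_powerset]

end OrderedGroup

theorem Finset.sum_Icc_one_natCast (m : ℕ) : ∑ i ∈ Icc 1 m, (i : ℝ) = m * (m + 1) / 2 := by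
  induction m with
  | zero => simp
  | succ k ih =>
    rw [sum_Icc_succ_top (by omega), ih]
    push_cast
    ring

open scoped Classical in
/-- For `n ≥ 2`, the set `A = {1, 2, ..., n - 1} ∪ {-n(n-1)/2}` consists of `n` real numbers,
sums to zero, and has exactly `2 ^ (n - 1) + 1` subsets with nonnegative sum. -/
theorem stmt_18 (n : ℕ) (hn : 2 ≤ n) :
    ∀ A : Finset ℝ,
      A = insert (-(n * (n - 1) / 2 : ℝ)) ((Finset.Icc 1 (n - 1)).image (fun i : ℕ => (i : ℝ))) →
      A.card = n ∧ A.sum id = 0 ∧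
        (A.powerset.filter (fun B => 0 ≤ B.sum id)).card = 2 ^ (n - 1) + 1 := by
  intro A hA
  set S : Finset ℝ := (Icc 1 (n - 1)).image (fun i : ℕ => (i : ℝ))
  have hS : ∀ x ∈ S, 0 < x := by
    simp only [S, mem_image, mem_Icc]
    rintro _ ⟨i, ⟨hi, _⟩, rfl⟩
    exact_mod_cast hi
  have hcard : #S = n - 1 := by
    rw [card_image_of_injective _ Nat.cast_injective, Nat.card_Icc, Nat.add_sub_cancel]
  have hsum : -(n * (n - 1) / 2 : ℝ) + ∑ x ∈ S, x = 0 := by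
    rw [sum_image fun _ _ _ _ h => Nat.cast_injective h, sum_Icc_one_natCast,
      Nat.cast_sub (by omega)]
    push_cast
    ring
  have hmS := notMem_of_add_sum_eq_zero hS hsum
  subst hA
  refine ⟨?_, ?_, ?_⟩
  · rw [card_insert_of_notMem hmS, hcard]
    omega
  · rwa [sum_insert hmS]
  · rw [← hcard]
    exact card_filter_sum_nonneg_powerset_insert_neg_sum hS hsum
end
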